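/- arXiv:1602.08740 — 9 statements merged into one kernel-verified Lean document; each statement's English description precedes it below -/
import Mathlib

section
/- A group Γ is boundedly simple if and only if every nontrivial central seminorm on Γ is a bounded norm. -/
/-!
A central seminorm `ν` is conjugation invariant, so on a product of `N` conjugates of `g` or
`g⁻¹` it is at most `ν 1 + N ν g`. Bounded simplicity therefore bounds `ν`, and if `ν a = 0`
for some `a ≠ 1` it forces `ν ≤ ν 1 ≤ 2 ν a = 0`.

Conversely, the indicator of the complement of a normal subgroup is a central seminorm; applied
to the normal closure of `g ≠ 1`, on which it vanishes, it shows that this normal closure is the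
whole group. The conjugation-invariant word length with respect to `g` is then a central
seminorm which is nonzero at `g`, and a bound `M` for it bounds the number of conjugates needed
by `⌈M⌉₊`.
-/

/-- A central seminorm on a group: nonnegative, symmetric under inverses,
subadditive, and central (`ν (g*h) = ν (h*g)`). -/
def IsCentralSeminorm {Γ : Type*} [Group Γ] (ν : Γ → ℝ) : Prop :=
  (∀ g : Γ, 0 ≤ ν g) ∧ (∀ g : Γ, ν g⁻¹ = ν g) ∧
  (∀ g h : Γ, ν (g * h) ≤ ν g + ν h) ∧ (∀ g h : Γ, ν (g * h) = ν (h * g))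

/-- A group is boundedly simple: for every nontrivial `g` there is `N` such that
every element is a product of at most `N` conjugates of `g` or `g⁻¹`. -/
def BoundedlySimple (Γ : Type*) [Group Γ] : Prop :=
  ∀ g : Γ, g ≠ 1 → ∃ N : ℕ, ∀ f : Γ, ∃ l : List Γ, l.length ≤ N ∧
    (∀ x ∈ l, ∃ γ : Γ, x = γ * g * γ⁻¹ ∨ x = γ * g⁻¹ * γ⁻¹) ∧ l.prod = f

section

variable {Γ : Type*} [Group Γ]

def IsConjWord (g : Γ) (l : List Γ) : Prop :=
  ∀ x ∈ l, ∃ γ : Γ, x = γ * g * γ⁻¹ ∨ x = γ * g⁻¹ * γ⁻¹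

namespace IsConjWord

variable {g : Γ} {l l' : List Γ}

theorem nil (g : Γ) : IsConjWord g [] := fun _ hx => absurd hx List.not_mem_nil

theorem singleton_of_isConj {x : Γ} (h : IsConj g x) : IsConjWord g [x] := by
  obtain ⟨γ, rfl⟩ := isConj_iff.mp h
  intro y hy
  exact ⟨γ, Or.inl (List.mem_singleton.mp hy)⟩

theorem append (h : IsConjWord g l) (h' : IsConjWord g l') : IsConjWord g (l ++ l') := by
  intro x hx
  rcases List.mem_append.mp hx with hx | hx
  exacts [h x hx, h' x hx]

theorem inv_reverse (h : IsConjWord g l) : IsConjWord g (l.map (·⁻¹)).reverse := by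
  intro x hx
  obtain ⟨y, hy, rfl⟩ := List.mem_map.mp (List.mem_reverse.mp hx)
  obtain ⟨γ, rfl | rfl⟩ := h y hy
  · exact ⟨γ, Or.inr (by group)⟩
  · exact ⟨γ, Or.inl (by group)⟩

theorem map_conj (c : Γ) (h : IsConjWord g l) : IsConjWord g (l.map (MulAut.conj c)) := by
  intro x hx
  obtain ⟨y, hy, rfl⟩ := List.mem_map.mp hx
  obtain ⟨γ, rfl | rfl⟩ := h y hy
  · exact ⟨c * γ, Or.inl (by simp only [MulAut.conj_apply]; group)⟩
  · exact ⟨c * γ, Or.inr (by simp only [MulAut.conj_apply]; group)⟩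

end IsConjWord

theorem exists_isConjWord_of_mem_normalClosure {g f : Γ}
    (hf : f ∈ Subgroup.normalClosure {g}) : ∃ l, IsConjWord g l ∧ l.prod = f := by
  induction hf using Subgroup.closure_induction with
  | mem x hx =>
    obtain ⟨_, rfl, hgx⟩ := Group.mem_conjugatesOfSet_iff.mp hx
    exact ⟨[x], .singleton_of_isConj hgx, List.prod_singleton⟩
  | one => exact ⟨[], .nil g, List.prod_nil⟩
  | mul x y _ _ hx hy =>
    obtain ⟨lx, hlx, rfl⟩ := hx
    obtain ⟨ly, hly, rfl⟩ := hy
    exact ⟨lx ++ ly, hlx.append hly, List.prod_append⟩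
  | inv x _ hx =>
    obtain ⟨l, hl, rfl⟩ := hx
    exact ⟨_, hl.inv_reverse, (List.prod_inv_reverse l).symm⟩

namespace IsCentralSeminorm

variable {ν : Γ → ℝ}

theorem map_conj (hν : IsCentralSeminorm ν) (γ x : Γ) : ν (γ * x * γ⁻¹) = ν x := by
  obtain ⟨-, -, -, hcomm⟩ := hν
  rw [hcomm, ← mul_assoc, inv_mul_cancel, one_mul]

theorem map_one_le (hν : IsCentralSeminorm ν) (a : Γ) : ν 1 ≤ 2 * ν a := by
  obtain ⟨-, hinv, hsub, -⟩ := hν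
  have h := hsub a a⁻¹
  rw [mul_inv_cancel, hinv] at h
  linarith

theorem eq_of_mem_isConjWord (hν : IsCentralSeminorm ν) {g x : Γ} {l : List Γ}
    (hl : IsConjWord g l) (hx : x ∈ l) : ν x = ν g := by
  obtain ⟨γ, rfl | rfl⟩ := hl x hx
  · exact hν.map_conj γ g
  · rw [hν.map_conj, hν.2.1]

theorem map_list_prod_le (hν : IsCentralSeminorm ν) {g : Γ} {l : List Γ}
    (hl : IsConjWord g l) : ν l.prod ≤ ν 1 + l.length * ν g := by
  induction l with
  | nil => simp
  | cons x l ih =>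
    have hx : ν x = ν g := hν.eq_of_mem_isConjWord hl List.mem_cons_self
    have hlen := ih fun y hy => hl y (List.mem_cons_of_mem x hy)
    calc ν (x * l.prod) ≤ ν x + ν l.prod := hν.2.2.1 x l.prod
      _ ≤ ν 1 + (l.length + 1 : ℕ) * ν g := by push_cast; linarith

theorem le_of_forall_exists_isConjWord (hν : IsCentralSeminorm ν) {g : Γ} {N : ℕ}
    (hN : ∀ f, ∃ l, l.length ≤ N ∧ IsConjWord g l ∧ l.prod = f) (f : Γ) :
    ν f ≤ ν 1 + N * ν g := by
  obtain ⟨l, hlen, hl, rfl⟩ := hN f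
  calc ν l.prod ≤ ν 1 + l.length * ν g := hν.map_list_prod_le hl
    _ ≤ ν 1 + N * ν g := by gcongr; exact hν.1 g

theorem bddAbove_of_boundedlySimple (hν : IsCentralSeminorm ν) (hΓ : BoundedlySimple Γ) :
    ∃ M, ∀ f, ν f ≤ M := by
  rcases subsingleton_or_nontrivial Γ with _ | _
  · exact ⟨ν 1, fun f => (congrArg ν (Subsingleton.elim f 1)).le⟩
  · obtain ⟨g, hg⟩ := exists_ne (1 : Γ)
    obtain ⟨N, hN⟩ := hΓ g hg
    exact ⟨_, hν.le_of_forall_exists_isConjWord hN⟩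

theorem pos_of_boundedlySimple (hν : IsCentralSeminorm ν) (hΓ : BoundedlySimple Γ)
    (hne : ∃ f, ν f ≠ 0) {a : Γ} (ha : a ≠ 1) : 0 < ν a := by
  refine (hν.1 a).lt_of_ne' fun h0 => ?_
  obtain ⟨N, hN⟩ := hΓ a ha
  obtain ⟨f, hf⟩ := hne
  have h1 : ν 1 ≤ 0 := by simpa [h0] using hν.map_one_le a
  have hfa := hν.le_of_forall_exists_isConjWord hN f
  rw [h0, mul_zero, add_zero] at hfa
  exact hf (le_antisymm (hfa.trans h1) (hν.1 f))

end IsCentralSeminorm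

theorem isCentralSeminorm_indicator_compl (N : Subgroup Γ) [hN : N.Normal] :
    IsCentralSeminorm ((N : Set Γ)ᶜ.indicator 1) := by
  classical
  simp only [IsCentralSeminorm, Set.indicator_apply, Set.mem_compl_iff, SetLike.mem_coe,
    Pi.one_apply, inv_mem_iff, hN.mem_comm_iff]
  refine ⟨fun f => by split_ifs <;> norm_num, fun _ => trivial, fun a b => ?_,
    fun _ _ => trivial⟩
  split_ifs <;> first
    | exact absurd (N.mul_mem ‹a ∈ N› ‹b ∈ N›) ‹a * b ∉ N›
    | norm_num

theorem normalClosure_eq_top_of_forall_pos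
    (h : ∀ ν : Γ → ℝ, IsCentralSeminorm ν → (∃ f, ν f ≠ 0) → ∀ a, a ≠ 1 → 0 < ν a)
    {g : Γ} (hg : g ≠ 1) : Subgroup.normalClosure {g} = ⊤ := by
  by_contra hne
  obtain ⟨f, -, hf⟩ := SetLike.exists_of_lt (lt_top_iff_ne_top.mpr hne)
  have hpos := h ((Subgroup.normalClosure {g} : Set Γ)ᶜ.indicator 1)
    (isCentralSeminorm_indicator_compl _) ⟨f, by simp [hf]⟩ g hg
  simp [Subgroup.subset_normalClosure (Set.mem_singleton g)] at hpos

def conjWordLengths (g f : Γ) : Set ℕ :=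
  {n | ∃ l, l.length = n ∧ IsConjWord g l ∧ l.prod = f}

/-- Junk value `0` when `f` is not in the normal closure of `g`. -/
noncomputable def conjWordLength (g f : Γ) : ℕ :=
  sInf (conjWordLengths g f)

section conjWordLength

variable {g : Γ}

theorem conjWordLength_le {f : Γ} {l : List Γ} (hl : IsConjWord g l) (hf : l.prod = f) :
    conjWordLength g f ≤ l.length :=
  Nat.sInf_le ⟨l, rfl, hl, hf⟩

theorem exists_isConjWord_length_eq {f : Γ} (hf : ∃ l, IsConjWord g l ∧ l.prod = f) :
    ∃ l, l.length = conjWordLength g f ∧ IsConjWord g l ∧ l.prod = f := by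
  obtain ⟨l, hl, hprod⟩ := hf
  exact Nat.sInf_mem (s := conjWordLengths g f) ⟨_, l, rfl, hl, hprod⟩

theorem conjWordLength_self_pos (hg : g ≠ 1) : 0 < conjWordLength g g := by
  obtain ⟨l, hlen, -, hprod⟩ :=
    exists_isConjWord_length_eq ⟨[g], .singleton_of_isConj (IsConj.refl g), List.prod_singleton⟩
  refine Nat.pos_of_ne_zero fun h0 => hg ?_
  rw [h0, List.length_eq_zero_iff] at hlen
  rw [← hprod, hlen, List.prod_nil]

theorem exists_isConjWord_length_eq_of_normalClosure_eq_top
    (htop : Subgroup.normalClosure {g} = ⊤) (f : Γ) :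
    ∃ l, l.length = conjWordLength g f ∧ IsConjWord g l ∧ l.prod = f :=
  exists_isConjWord_length_eq (exists_isConjWord_of_mem_normalClosure (htop ▸ Subgroup.mem_top f))

theorem conjWordLength_mul_le (htop : Subgroup.normalClosure {g} = ⊤) (a b : Γ) :
    conjWordLength g (a * b) ≤ conjWordLength g a + conjWordLength g b := by
  obtain ⟨la, hlen_a, hla, rfl⟩ := exists_isConjWord_length_eq_of_normalClosure_eq_top htop a
  obtain ⟨lb, hlen_b, hlb, rfl⟩ := exists_isConjWord_length_eq_of_normalClosure_eq_top htop b
  rw [← hlen_a, ← hlen_b, ← List.length_append]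
  exact conjWordLength_le (hla.append hlb) List.prod_append

theorem conjWordLength_inv_le (htop : Subgroup.normalClosure {g} = ⊤) (f : Γ) :
    conjWordLength g f⁻¹ ≤ conjWordLength g f := by
  obtain ⟨l, hlen, hl, rfl⟩ := exists_isConjWord_length_eq_of_normalClosure_eq_top htop f
  rw [← hlen]
  simpa using conjWordLength_le hl.inv_reverse (List.prod_inv_reverse l).symm

theorem conjWordLength_conj_le (htop : Subgroup.normalClosure {g} = ⊤) (c f : Γ) :
    conjWordLength g (MulAut.conj c f) ≤ conjWordLength g f := by
  obtain ⟨l, hlen, hl, rfl⟩ := exists_isConjWord_length_eq_of_normalClosure_eq_top htop f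
  rw [← hlen]
  simpa using conjWordLength_le (hl.map_conj c) (map_list_prod (MulAut.conj c) l).symm

theorem isCentralSeminorm_conjWordLength (htop : Subgroup.normalClosure {g} = ⊤) :
    IsCentralSeminorm fun f => (conjWordLength g f : ℝ) := by
  have hcomm (a b : Γ) : conjWordLength g (b * a) ≤ conjWordLength g (a * b) := by
    simpa [mul_assoc] using conjWordLength_conj_le htop a⁻¹ (a * b)
  refine ⟨fun f => Nat.cast_nonneg _, fun f => ?_, fun a b => ?_, fun a b => ?_⟩ <;> beta_reduce
  · have hinv := conjWordLength_inv_le htop f⁻¹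
    rw [inv_inv] at hinv
    exact_mod_cast (conjWordLength_inv_le htop f).antisymm hinv
  · exact_mod_cast conjWordLength_mul_le htop a b
  · exact_mod_cast (hcomm b a).antisymm (hcomm a b)

end conjWordLength

end

/-- A group is boundedly simple iff every nontrivial central seminorm on it is a
bounded norm. -/
theorem boundedlySimple_iff_every_nontrivial_central_seminorm_is_bounded_norm
    {Γ : Type*} [Group Γ] :
    BoundedlySimple Γ ↔
      ∀ ν : Γ → ℝ, IsCentralSeminorm ν → (∃ g : Γ, ν g ≠ 0) →
        ((∃ M : ℝ, ∀ g : Γ, ν g ≤ M) ∧ ∀ g : Γ, g ≠ 1 → 0 < ν g) := by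
  refine ⟨fun hΓ ν hν hne =>
    ⟨hν.bddAbove_of_boundedlySimple hΓ, fun _ => hν.pos_of_boundedlySimple hΓ hne⟩,
    fun h g hg => ?_⟩
  have htop := normalClosure_eq_top_of_forall_pos (fun ν hν hne => (h ν hν hne).2) hg
  obtain ⟨⟨M, hM⟩, -⟩ := h _ (isCentralSeminorm_conjWordLength htop)
    ⟨g, Nat.cast_ne_zero.mpr (conjWordLength_self_pos hg).ne'⟩
  refine ⟨⌈M⌉₊, fun f => ?_⟩
  obtain ⟨l, hlen, hl, hprod⟩ := exists_isConjWord_length_eq_of_normalClosure_eq_top htop f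
  refine ⟨l, ?_, hl, hprod⟩
  rw [hlen]
  exact_mod_cast (hM f).trans (Nat.le_ceil M)
end

section
/- If α and hβh⁻¹ commute in a group Γ, then the commutator [α,β] can be written as a product of two h-commutators, i.e., [α,β] ∈ ([Γ,h])² where [Γ,h] = {[g,h] : g ∈ Γ}; explicitly [α,β] = [αβα⁻¹, αhα⁻¹]·[β⁻¹, βhβ⁻¹]. -/
open scoped commutatorElement

section

variable {G : Type*} [Group G]

theorem commutatorElement_mul_inv_right_of_commute {a c : G} (b : G) (hac : Commute a c) :
    ⁅a, b * c⁻¹⁆ = ⁅a, b⁆ := by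
  simp only [commutatorElement_def, mul_inv_rev, inv_inv, mul_assoc, ← mul_assoc a⁻¹ c,
    hac.inv_left.eq, inv_mul_cancel_left]

theorem commutatorElement_inv_conj (a b : G) : ⁅a⁻¹, a * b * a⁻¹⁆ = ⁅b, a⁆ := by
  simp [commutatorElement_def, mul_assoc]

theorem commutatorElement_conj_right (g x h : G) :
    ⁅g, x * h * x⁻¹⁆ = (g * x) * h * (g * x)⁻¹ * (x * h⁻¹ * x⁻¹) := by
  group

/-- The right-hand side is `⁅α, ⁅β, h⁆⁆`, and `⁅β, h⁆ = β * (h * β * h⁻¹)⁻¹` where `α` commutes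
with `h * β * h⁻¹`. -/
theorem commutatorElement_eq_mul_of_commute_conj {α β h : G} (hc : Commute α (h * β * h⁻¹)) :
    ⁅α, β⁆ = ⁅α * β * α⁻¹, α * h * α⁻¹⁆ * ⁅β⁻¹, β * h * β⁻¹⁆ := by
  rw [← conjugate_commutatorElement, commutatorElement_inv_conj]
  calc ⁅α, β⁆ = ⁅α, β * (h * β * h⁻¹)⁻¹⁆ :=
        (commutatorElement_mul_inv_right_of_commute β hc).symm
    _ = α * ⁅β, h⁆ * α⁻¹ * ⁅h, β⁆ := by simp only [commutatorElement_def]; group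

end

/-- If `α` commutes with `hβh⁻¹`, then `[α,β] = [αβα⁻¹, αhα⁻¹]·[β⁻¹, βhβ⁻¹]`;
in particular `[α,β]` is a product of two `h`-commutators, i.e. a product of two
conjugates of `h` and two conjugates of `h⁻¹`. -/
theorem commutator_eq_product_of_two_h_commutators {Γ : Type*} [Group Γ]
    (α β h : Γ) (hc : Commute α (h * β * h⁻¹)) :
    ⁅α, β⁆ = ⁅α * β * α⁻¹, α * h * α⁻¹⁆ * ⁅β⁻¹, β * h * β⁻¹⁆ ∧
    ∃ a b c d : Γ,
      ⁅α, β⁆ = (a * h * a⁻¹) * (b * h⁻¹ * b⁻¹) * (c * h * c⁻¹) * (d * h⁻¹ * d⁻¹) := by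
  have hprod := commutatorElement_eq_mul_of_commute_conj hc
  refine ⟨hprod, ?_⟩
  rw [hprod, commutatorElement_conj_right, commutatorElement_conj_right, ← mul_assoc]
  exact ⟨_, _, _, _, rfl⟩
end

section
/- Let Γ be a group, H ≤ Γ a subgroup, and h ∈ Γ an element such that [f, hⁱg h⁻ⁱ] = 1 for all f, g ∈ H and all 1 ≤ i ≤ k (h k-displaces H), with k ≥ 2. Then every product of at most k commutators of elements of H can be written in the form [α,β][γ,h] for some α, β, γ ∈ Γ. -/
/-!
Write `f = ⁅a₁, b₁⁆ ⋯ ⁅aₙ, bₙ⁆` with `n ≤ k`, and let `A = a₁ (h a₂ h⁻¹) ⋯ (hⁿ⁻¹ aₙ h¹⁻ⁿ)` and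
`B` likewise. The factors of `A` and `B` lie in the conjugates `hⁱ H h⁻ⁱ`, `0 ≤ i < k`, and two
distinct such conjugates commute because `h` `k`-displaces `H`. Hence `⁅A, B⁆` is the product of
the conjugated commutators `hⁱ ⁅aᵢ₊₁, bᵢ₊₁⁆ h⁻ⁱ`, and this product differs from `f` by a right
factor `⁅γ, h⁆`: moving one conjugation by `h` onto a tail of the product costs exactly a
commutator with `h`, as long as the head commutes with the conjugated tail.
-/

open scoped commutatorElement

section

variable {G : Type*} [Group G]

theorem Commute.commutatorElement_right {a u v : G} (hu : Commute a u) (hv : Commute a v) :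
    Commute a ⁅u, v⁆ := by
  rw [commutatorElement_def]
  exact ((hu.mul_right hv).mul_right hu.inv_right).mul_right hv.inv_right

theorem commutatorElement_mul_mul_of_commute {a b u v : G} (hau : Commute a u)
    (hav : Commute a v) (hbu : Commute b u) (hbv : Commute b v) :
    ⁅a * u, b * v⁆ = ⁅a, b⁆ * ⁅u, v⁆ := by
  have hac := hau.commutatorElement_right hav
  have hbc := hbu.commutatorElement_right hbv
  rw [commutatorElement_mul_left_eq_conj_mul, commutatorElement_mul_right_eq_mul_conj,
    commutatorElement_mul_right_eq_mul_conj, hbu.symm.commutator_eq, hav.commutator_eq]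
  simp only [one_mul, mul_one, mul_inv_cancel_right]
  rw [hbc.eq, mul_inv_cancel_right, hac.eq, mul_inv_cancel_right]
  exact (hac.symm.commutatorElement_right hbc.symm).eq

theorem exists_eq_conj_mul_commutatorElement_of_commute {h x z γ : G}
    (hx : x = z * ⁅γ, h⁆) (hxz : Commute x (h * z * h⁻¹)) :
    ∃ γ' : G, x = h * z * h⁻¹ * ⁅γ', h⁆ := by
  have hcomm : ⁅x * (h * γ * h⁻¹), h⁆ = x * (h * z * h⁻¹)⁻¹ := by
    subst hx
    simp only [commutatorElement_def]
    group
  refine ⟨x * (h * γ * h⁻¹), ?_⟩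
  rw [hcomm, ← mul_assoc, ← hxz.eq, mul_inv_cancel_right]

/-- `conjPowProd h [x₀, x₁, …, xₙ] = x₀ * (h * x₁ * h⁻¹) * ⋯ * (hⁿ * xₙ * h⁻ⁿ)`. -/
def conjPowProd (h : G) : List G → G
  | [] => 1
  | x :: l => x * (h * conjPowProd h l * h⁻¹)

def KDisplaces (h : G) (k : ℕ) (H : Subgroup G) : Prop :=
  ∀ f g : G, f ∈ H → g ∈ H → ∀ i : ℕ, 1 ≤ i → i ≤ k → Commute f (h ^ i * g * (h ^ i)⁻¹)

namespace KDisplaces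

variable {H : Subgroup G} {h : G} {k : ℕ}

theorem commute_conj_pow_conjPowProd (hd : KDisplaces h k H) {l : List G}
    (hl : ∀ y ∈ l, y ∈ H) {j : ℕ} (hj : 1 ≤ j) (hjl : j + l.length ≤ k + 1) {x : G}
    (hx : x ∈ H) : Commute x (h ^ j * conjPowProd h l * (h ^ j)⁻¹) := by
  induction l generalizing j with
  | nil => simp [conjPowProd]
  | cons y l ih =>
    simp only [List.length_cons, List.forall_mem_cons] at hjl hl
    have hsplit : h ^ j * conjPowProd h (y :: l) * (h ^ j)⁻¹ =
        h ^ j * y * (h ^ j)⁻¹ * (h ^ (j + 1) * conjPowProd h l * (h ^ (j + 1))⁻¹) := by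
      simp only [conjPowProd, pow_succ]
      group
    rw [hsplit]
    exact (hd x y hx hl.1 j hj (by omega)).mul_right (ih hl.2 (by omega) (by omega))

theorem commute_conj_conjPowProd (hd : KDisplaces h k H) {l : List G}
    (hl : ∀ y ∈ l, y ∈ H) (hlen : l.length ≤ k) {x : G} (hx : x ∈ H) :
    Commute x (h * conjPowProd h l * h⁻¹) := by
  simpa using hd.commute_conj_pow_conjPowProd hl le_rfl (by omega) hx

theorem conjPowProd_map_commutatorElement (hd : KDisplaces h k H) {l : List (G × G)}
    (hl : ∀ p ∈ l, p.1 ∈ H ∧ p.2 ∈ H) (hlen : l.length ≤ k) :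
    conjPowProd h (l.map fun p => ⁅p.1, p.2⁆) =
      ⁅conjPowProd h (l.map Prod.fst), conjPowProd h (l.map Prod.snd)⁆ := by
  induction l with
  | nil => simp [conjPowProd]
  | cons p l ih =>
    simp only [List.length_cons, List.forall_mem_cons] at hlen hl
    have hfst {x : G} : x ∈ H → Commute x (h * conjPowProd h (l.map Prod.fst) * h⁻¹) :=
      hd.commute_conj_conjPowProd (List.forall_mem_map.2 fun q hq => (hl.2 q hq).1) (by simp; omega)
    have hsnd {x : G} : x ∈ H → Commute x (h * conjPowProd h (l.map Prod.snd) * h⁻¹) :=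
      hd.commute_conj_conjPowProd (List.forall_mem_map.2 fun q hq => (hl.2 q hq).2) (by simp; omega)
    simp only [List.map_cons, conjPowProd]
    rw [ih hl.2 (by omega), conjugate_commutatorElement, commutatorElement_mul_mul_of_commute
      (hfst hl.1.1) (hsnd hl.1.1) (hfst hl.1.2) (hsnd hl.1.2)]

theorem exists_prod_eq_conjPowProd_mul_commutatorElement (hd : KDisplaces h k H)
    {l : List G} (hl : ∀ y ∈ l, y ∈ H) (hlen : l.length ≤ k) :
    ∃ γ : G, l.prod = conjPowProd h l * ⁅γ, h⁆ := by
  induction l with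
  | nil => exact ⟨1, by simp [conjPowProd]⟩
  | cons y l ih =>
    simp only [List.length_cons, List.forall_mem_cons] at hlen hl
    obtain ⟨γ, hγ⟩ := ih hl.2 (by omega)
    obtain ⟨γ', hγ'⟩ := exists_eq_conj_mul_commutatorElement_of_commute hγ
      (hd.commute_conj_conjPowProd hl.2 (by omega) (H.list_prod_mem hl.2))
    exact ⟨γ', by rw [List.prod_cons, hγ', conjPowProd, ← mul_assoc, ← mul_assoc]⟩

end KDisplaces

end

theorem product_of_commutators_of_k_displaces_general {Γ : Type*} [Group Γ]
    (H : Subgroup Γ) (h : Γ) (k : ℕ)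
    (hdisp : ∀ f g : Γ, f ∈ H → g ∈ H → ∀ i : ℕ, 1 ≤ i → i ≤ k →
      Commute f (h ^ i * g * (h ^ i)⁻¹))
    (f : Γ)
    (hf : ∃ l : List (Γ × Γ), l.length ≤ k ∧ (∀ p ∈ l, p.1 ∈ H ∧ p.2 ∈ H) ∧
      (l.map fun p => ⁅p.1, p.2⁆).prod = f) :
    ∃ α β γ : Γ, f = ⁅α, β⁆ * ⁅γ, h⁆ := by
  obtain ⟨l, hlen, hl, rfl⟩ := hf
  have hd : KDisplaces h k H := hdisp
  have hcH : ∀ c ∈ l.map fun p => ⁅p.1, p.2⁆, c ∈ H := List.forall_mem_map.2 fun p hp => by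
    obtain ⟨ha, hb⟩ := hl p hp
    rw [commutatorElement_def]
    exact mul_mem (mul_mem (mul_mem ha hb) (inv_mem ha)) (inv_mem hb)
  obtain ⟨γ, hγ⟩ := hd.exists_prod_eq_conjPowProd_mul_commutatorElement hcH (by simpa)
  exact ⟨_, _, γ, by rw [hγ, hd.conjPowProd_map_commutatorElement hl hlen]⟩

/-- Burago–Ivanov–Polterovich: if `h` `k`-displaces the subgroup `H` (with
`k ≥ 2`), then every product of at most `k` commutators of elements of `H` is of
the form `[α,β][γ,h]`. -/
theorem product_of_commutators_of_k_displaces {Γ : Type*} [Group Γ]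
    (H : Subgroup Γ) (h : Γ) (k : ℕ) (hk : 2 ≤ k)
    (hdisp : ∀ f g : Γ, f ∈ H → g ∈ H → ∀ i : ℕ, 1 ≤ i → i ≤ k →
      Commute f (h ^ i * g * (h ^ i)⁻¹))
    (f : Γ)
    (hf : ∃ l : List (Γ × Γ), l.length ≤ k ∧ (∀ p ∈ l, p.1 ∈ H ∧ p.2 ∈ H) ∧
      (l.map fun p => ⁅p.1, p.2⁆).prod = f) :
    ∃ α β γ : Γ, f = ⁅α, β⁆ * ⁅γ, h⁆ :=
  product_of_commutators_of_k_displaces_general H h k hdisp f hf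
end

section
/- Let Γ be a group acting faithfully by order-preserving bijections on a linear order (I,≤). If the action is bounded (every element's support lies in some open interval (a,b)) and proximal (for all a<b and c<d in I there is g ∈ Γ with g(a) < c and d < g(b)), then the commutator subgroup Γ' is 6-uniformly simple: for every nontrivial f ∈ Γ' and nontrivial h ∈ Γ', f is a product of at most 6 conjugates (in Γ') of h or h⁻¹. -/
/-!
Write `f ∈ Γ'` as a product of commutators of elements supported in a bounded interval `J`. By
proximality some conjugate `T = γ * h * γ⁻¹` with `γ ∈ Γ'` has a fundamental domain `(y, T • y)`
containing `J`; pushing the factors onto the pairwise disjoint translates `Tᵏ • J` telescopes `f`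
into `⁅X, T⁆ * ⁅U, V⁆` with `X ∈ Γ'`, and `U`, `V` can be traded for elements of `Γ'` with the same
commutator. Then `⁅X, T⁆` is a product of two conjugates of `h^{±1}`, and `⁅U, V⁆` of four, because
a conjugate of `h` moves the support of `V` off that of `U`.
-/

open MulAction
open scoped commutatorElement

section Commutators

variable {G : Type*} [Group G]

theorem commutatorElement_mem_commutator (a b : G) : ⁅a, b⁆ ∈ commutator G :=
  Subgroup.commutator_mem_commutator (Subgroup.mem_top a) (Subgroup.mem_top b)

theorem commutatorElement_mul_mul_of_commute_s9 {a b P Q : G} (haP : Commute a P)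
    (haQ : Commute a Q) (hbP : Commute b P) (hbQ : Commute b Q) :
    ⁅a * P, b * Q⁆ = ⁅a, b⁆ * ⁅P, Q⁆ := by
  have hb : Commute b⁻¹ ⁅P, Q⁆ := by
    simp only [commutatorElement_def]
    exact (((hbP.mul_right hbQ).mul_right hbP.inv_right).mul_right hbQ.inv_right).inv_left
  calc ⁅a * P, b * Q⁆ = a * (P * b) * Q * (P⁻¹ * a⁻¹) * Q⁻¹ * b⁻¹ := by group
    _ = a * (b * P) * Q * (a⁻¹ * P⁻¹) * Q⁻¹ * b⁻¹ := by
      rw [hbP.eq, haP.inv_inv.eq]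
    _ = a * b * (P * Q * a⁻¹) * P⁻¹ * Q⁻¹ * b⁻¹ := by group
    _ = a * b * (a⁻¹ * (P * Q)) * P⁻¹ * Q⁻¹ * b⁻¹ := by
      rw [(haP.mul_right haQ).inv_left.eq]
    _ = a * b * a⁻¹ * (⁅P, Q⁆ * b⁻¹) := by group
    _ = ⁅a, b⁆ * ⁅P, Q⁆ := by rw [← hb.eq]; group

theorem commutatorElement_eq_of_commute_conj {U V S : G} (h : Commute (S * V * S⁻¹) U) :
    ⁅U, V⁆ = (U * V) * S * (U * V)⁻¹ * (U * S⁻¹ * U⁻¹) * S * (V * S⁻¹ * V⁻¹) :=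
  calc ⁅U, V⁆ = U * V * (S * V⁻¹ * S⁻¹) * ((S * V * S⁻¹) * U⁻¹) * V⁻¹ := by group
    _ = U * V * (S * V⁻¹ * S⁻¹) * (U⁻¹ * (S * V * S⁻¹)) * V⁻¹ := by rw [h.inv_right.eq]
    _ = (U * V) * S * (U * V)⁻¹ * (U * S⁻¹ * U⁻¹) * S * (V * S⁻¹ * V⁻¹) := by group

theorem mul_commutatorElement_mul_eq {c X t w : G} (h : Commute ⁅X, t⁆ w) :
    c * (⁅X, t⁆ * w) = ⁅c * ⁅X, t⁆ * w * (t * X * t⁻¹), t⁆ * (t * (c * w) * t⁻¹) := by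
  generalize hK : ⁅X, t⁆ = K at h ⊢
  calc c * (K * w) = c * K * w * (t * ⁅X, t⁆ * K⁻¹ * t⁻¹) := by rw [hK]; group
    _ = c * K * w * (t * X * t * X⁻¹ * t⁻¹) * w⁻¹ * (w * K⁻¹) * t⁻¹ := by
      simp only [commutatorElement_def]; group
    _ = c * K * w * (t * X * t * X⁻¹ * t⁻¹) * w⁻¹ * (K⁻¹ * w) * t⁻¹ := by rw [h.inv_left.eq]
    _ = ⁅c * K * w * (t * X * t⁻¹), t⁆ * (t * (c * w) * t⁻¹) := by group

def IsProdConj (H : Subgroup G) (h : G) (n : ℕ) (f : G) : Prop :=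
  ∃ l : List G, l.length ≤ n ∧
    (∀ x ∈ l, ∃ γ ∈ H, x = γ * h * γ⁻¹ ∨ x = γ * h⁻¹ * γ⁻¹) ∧ l.prod = f

namespace IsProdConj

variable {H : Subgroup G} {h f g γ : G} {m n : ℕ}

theorem mul (hf : IsProdConj H h m f) (hg : IsProdConj H h n g) :
    IsProdConj H h (m + n) (f * g) := by
  obtain ⟨l, hl, hlH, rfl⟩ := hf
  obtain ⟨l', hl', hl'H, rfl⟩ := hg
  refine ⟨l ++ l', by simp only [List.length_append]; omega, ?_, List.prod_append⟩
  simpa only [List.mem_append] using fun x hx => hx.elim (hlH x) (hl'H x)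

theorem conj (hγ : γ ∈ H) : IsProdConj H h 1 (γ * h * γ⁻¹) :=
  ⟨[_], le_rfl, by simpa using ⟨γ, hγ, Or.inl rfl⟩, List.prod_singleton⟩

theorem conj_inv (hγ : γ ∈ H) : IsProdConj H h 1 (γ * h⁻¹ * γ⁻¹) :=
  ⟨[_], le_rfl, by simpa using ⟨γ, hγ, Or.inr rfl⟩, List.prod_singleton⟩

theorem of_inv (hf : IsProdConj H h⁻¹ n f) : IsProdConj H h n f := by
  obtain ⟨l, hl, hlH, rfl⟩ := hf
  refine ⟨l, hl, fun x hx => ?_, rfl⟩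
  obtain ⟨γ, hγ, hx⟩ := hlH x hx
  exact ⟨γ, hγ, by rwa [inv_inv, or_comm] at hx⟩

theorem commutatorElement_conj {X : G} (hX : X ∈ H) (hγ : γ ∈ H) :
    IsProdConj H h 2 ⁅X, γ * h * γ⁻¹⁆ := by
  have : ⁅X, γ * h * γ⁻¹⁆ = (X * γ) * h * (X * γ)⁻¹ * (γ * h⁻¹ * γ⁻¹) := by group
  exact this ▸ (conj (mul_mem hX hγ)).mul (conj_inv hγ)

theorem commutatorElement_of_commute {U V δ : G} (hU : U ∈ H) (hV : V ∈ H) (hδ : δ ∈ H)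
    (hUV : Commute (δ * h * δ⁻¹ * V * (δ * h * δ⁻¹)⁻¹) U) : IsProdConj H h 4 ⁅U, V⁆ := by
  rw [commutatorElement_eq_of_commute_conj hUV]
  have : (U * V) * (δ * h * δ⁻¹) * (U * V)⁻¹ * (U * (δ * h * δ⁻¹)⁻¹ * U⁻¹) * (δ * h * δ⁻¹) *
      (V * (δ * h * δ⁻¹)⁻¹ * V⁻¹) = (U * V * δ) * h * (U * V * δ)⁻¹ *
      ((U * δ) * h⁻¹ * (U * δ)⁻¹) * (δ * h * δ⁻¹) * ((V * δ) * h⁻¹ * (V * δ)⁻¹) := by group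
  rw [this]
  exact (((conj (mul_mem (mul_mem hU hV) hδ)).mul (conj_inv (mul_mem hU hδ))).mul
    (conj hδ)).mul (conj_inv (mul_mem hV hδ))

end IsProdConj

end Commutators

theorem MulAction.commute_of_forall_smul_eq_or {G α : Type*} [Group G] [MulAction G α]
    [FaithfulSMul G α] {u v : G} (h : ∀ x : α, u • x = x ∨ v • x = x) : Commute u v :=
  MulAction.toPerm_injective (α := G) (β := α) <| by
    simpa only [← MulAction.toPermHom_apply, map_mul] using
      (Equiv.Perm.Disjoint.commute (f := toPerm u) (g := toPerm v) h).eq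

namespace OrderAction

def IsProximal (Γ I : Type*) [SMul Γ I] [LT I] : Prop :=
  ∀ a b c d : I, a < b → c < d → ∃ g : Γ, g • a < c ∧ d < g • b

variable {Γ I : Type*} [Group Γ] [LinearOrder I] [MulAction Γ I]

variable (Γ) in
def supportedIn (a b : I) : Subgroup Γ where
  carrier := {g | (fixedBy I g)ᶜ ⊆ Set.Ioo a b}
  mul_mem' {g h} hg hh := by
    refine (Set.compl_subset_compl.mpr (fixedBy_mul I g h)).trans ?_
    rw [Set.compl_inter]
    exact Set.union_subset hg hh
  one_mem' := by simp [fixedBy_one_eq_univ]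
  inv_mem' {g} hg := show (fixedBy I g⁻¹)ᶜ ⊆ _ by rwa [fixedBy_inv]

variable {a b c d : I} {g u v : Γ}

theorem smul_eq_self_of_mem_supportedIn (hg : g ∈ supportedIn Γ a b) {x : I}
    (hx : x ∉ Set.Ioo a b) : g • x = x :=
  not_not.mp fun h => hx (hg h)

theorem supportedIn_mono {a' b' : I} (ha : a' ≤ a) (hb : b ≤ b') :
    supportedIn Γ a b ≤ supportedIn Γ a' b' :=
  fun _ hg _ hx => Set.Ioo_subset_Ioo ha hb (hg hx)

theorem commutator_supportedIn_mono {a' b' : I} (ha : a' ≤ a) (hb : b ≤ b') :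
    ⁅supportedIn Γ a b, supportedIn Γ a b⁆ ≤ ⁅supportedIn Γ a' b', supportedIn Γ a' b'⁆ :=
  Subgroup.commutator_mono (supportedIn_mono ha hb) (supportedIn_mono ha hb)

theorem commute_of_mem_supportedIn [FaithfulSMul Γ I] (hu : u ∈ supportedIn Γ a b)
    (hv : v ∈ supportedIn Γ c d) (hbc : b ≤ c) : Commute u v :=
  commute_of_forall_smul_eq_or fun x => (le_or_gt b x).imp
    (fun hx => smul_eq_self_of_mem_supportedIn hu (Set.notMem_Ioo_of_ge hx))
    (fun hx => smul_eq_self_of_mem_supportedIn hv (Set.notMem_Ioo_of_le (hx.le.trans hbc)))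

theorem exists_mem_commutator_supportedIn [Nonempty I]
    (hbdd : ∀ g : Γ, ∃ a b : I, g ∈ supportedIn Γ a b) {f : Γ} (hf : f ∈ commutator Γ) :
    ∃ a b : I, f ∈ ⁅supportedIn Γ a b, supportedIn Γ a b⁆ := by
  rw [commutator_eq_closure] at hf
  induction hf using Subgroup.closure_induction with
  | mem _ hc =>
    obtain ⟨g₁, g₂, rfl⟩ := hc
    obtain ⟨a₁, b₁, hg₁⟩ := hbdd g₁
    obtain ⟨a₂, b₂, hg₂⟩ := hbdd g₂
    exact ⟨min a₁ a₂, max b₁ b₂, Subgroup.commutator_mem_commutator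
      (supportedIn_mono (min_le_left _ _) (le_max_left _ _) hg₁)
      (supportedIn_mono (min_le_right _ _) (le_max_right _ _) hg₂)⟩
  | one => exact ⟨Classical.arbitrary I, Classical.arbitrary I, one_mem _⟩
  | mul _ _ _ _ ih₁ ih₂ =>
    obtain ⟨a₁, b₁, h₁⟩ := ih₁
    obtain ⟨a₂, b₂, h₂⟩ := ih₂
    exact ⟨min a₁ a₂, max b₁ b₂, mul_mem
      (commutator_supportedIn_mono (min_le_left _ _) (le_max_left _ _) h₁)
      (commutator_supportedIn_mono (min_le_right _ _) (le_max_right _ _) h₂)⟩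
  | inv _ _ ih =>
    obtain ⟨a, b, h⟩ := ih
    exact ⟨a, b, inv_mem h⟩

namespace IsProximal

theorem noMaxOrder (hprox : IsProximal Γ I) [Nontrivial I] : NoMaxOrder I := by
  obtain ⟨a, b, hab⟩ := exists_pair_lt I
  refine ⟨fun w => (lt_or_ge w b).elim (fun hwb => ⟨b, hwb⟩) fun hbw => ?_⟩
  obtain ⟨g, -, hg⟩ := hprox a w a w (hab.trans_le hbw) (hab.trans_le hbw)
  exact ⟨g • w, hg⟩

theorem noMinOrder (hprox : IsProximal Γ I) [Nontrivial I] : NoMinOrder I := by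
  obtain ⟨a, b, hab⟩ := exists_pair_lt I
  refine ⟨fun w => (lt_or_ge a w).elim (fun haw => ⟨a, haw⟩) fun hwa => ?_⟩
  obtain ⟨g, hg, -⟩ := hprox w b w b (hwa.trans_lt hab) (hwa.trans_lt hab)
  exact ⟨g • w, hg⟩

theorem exists_lt_smul [NoMaxOrder I] [NoMinOrder I] (hprox : IsProximal Γ I) (x y : I) :
    ∃ k : Γ, y < k • x := by
  obtain ⟨a, ha⟩ := exists_lt x
  obtain ⟨d, hd⟩ := exists_gt y
  obtain ⟨k, -, hk⟩ := hprox a x y d ha hd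
  exact ⟨k, hd.trans hk⟩

end IsProximal

section Monotone

variable [CovariantClass Γ I (· • ·) (· ≤ ·)]

theorem smul_le_smul_iff {x y : I} : g • x ≤ g • y ↔ x ≤ y :=
  ⟨fun h => by simpa using (act_rel_act_of_rel g⁻¹ h : g⁻¹ • g • x ≤ g⁻¹ • g • y),
    act_rel_act_of_rel g⟩

theorem smul_lt_smul_iff {x y : I} : g • x < g • y ↔ x < y := by
  simp only [lt_iff_not_ge, smul_le_smul_iff]

theorem conj_mem_supportedIn (hg : g ∈ supportedIn Γ a b) (t : Γ) :
    t * g * t⁻¹ ∈ supportedIn Γ (t • a) (t • b) := by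
  intro x hx
  have : g • t⁻¹ • x ≠ t⁻¹ • x := fun h => hx <| by
    rw [mem_fixedBy, mul_smul, mul_smul, h, smul_inv_smul]
  obtain ⟨hax, hxb⟩ := hg this
  rw [← smul_lt_smul_iff (g := t), smul_inv_smul] at hax hxb
  exact ⟨hax, hxb⟩

theorem smul_lt_conj_smul {δ h : Γ} {x w : I} (hw : δ • x < w) :
    δ • h • x < (δ * h * δ⁻¹) • w := by
  rwa [mul_smul, mul_smul, smul_lt_smul_iff, smul_lt_smul_iff, ← smul_lt_smul_iff (g := δ),
    smul_inv_smul]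

theorem IsProximal.exists_mem_commutator_smul_lt [NoMaxOrder I] [NoMinOrder I]
    (hprox : IsProximal Γ I) (hbdd : ∀ g : Γ, ∃ a b : I, g ∈ supportedIn Γ a b) {x y : I}
    (hxy : x < y) (A B : I) : ∃ γ ∈ commutator Γ, γ • x < A ∧ B < γ • y := by
  obtain ⟨d, hd⟩ := exists_gt (max A B)
  obtain ⟨g, hgx, hgy⟩ := hprox x y A d hxy ((le_max_left _ _).trans_lt hd)
  obtain ⟨a, b, hg⟩ := hbdd g
  obtain ⟨k, hk⟩ := hprox.exists_lt_smul a y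
  -- `k * g⁻¹ * k⁻¹` is supported to the right of `y`, so `⁅g, k⁆` agrees with `g` up to `y`
  have hfix : ∀ w ≤ y, (k * g⁻¹ * k⁻¹) • w = w := fun w hw =>
    smul_eq_self_of_mem_supportedIn (conj_mem_supportedIn (inv_mem hg) k)
      (Set.notMem_Ioo_of_le (hw.trans hk.le))
  have hγ : ⁅g, k⁆ = g * (k * g⁻¹ * k⁻¹) := by group
  refine ⟨⁅g, k⁆, commutatorElement_mem_commutator g k, ?_, ?_⟩
  · rwa [hγ, mul_smul, hfix x hxy.le]
  · rw [hγ, mul_smul, hfix y le_rfl]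
    exact (le_max_right _ _).trans_lt (hd.trans hgy)

theorem exists_commutatorElement_mul_eq [FaithfulSMul Γ I] {t X U V a b : Γ} {y z : I}
    (hy : y ≤ t • y) (ha : a ∈ supportedIn Γ y (t • y)) (hb : b ∈ supportedIn Γ y (t • y))
    (hX : X ∈ commutator Γ) (hz : t • y ≤ z) (hU : U ∈ supportedIn Γ (t • y) z)
    (hV : V ∈ supportedIn Γ (t • y) z) (hXUV : ⁅X, t⁆ * ⁅U, V⁆ ∈ supportedIn Γ y (t • y)) :
    ∃ X' ∈ commutator Γ, ∃ z', t • y ≤ z' ∧ ∃ U' ∈ supportedIn Γ (t • y) z',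
      ∃ V' ∈ supportedIn Γ (t • y) z', ⁅a, b⁆ * (⁅X, t⁆ * ⁅U, V⁆) = ⁅X', t⁆ * ⁅U', V'⁆ := by
  have hUV : ⁅U, V⁆ ∈ supportedIn Γ (t • y) z :=
    Subgroup.commutator_le_self _ (Subgroup.commutator_mem_commutator hU hV)
  have hK : Commute ⁅X, t⁆ ⁅U, V⁆ := by
    simpa only [mul_inv_cancel_right] using
      (commute_of_mem_supportedIn hXUV hUV le_rfl).mul_left (Commute.refl _).inv_left
  have hyz : supportedIn Γ (t • y) z ≤ supportedIn Γ y z := supportedIn_mono hy le_rfl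
  have hty : supportedIn Γ y (t • y) ≤ supportedIn Γ y z := supportedIn_mono le_rfl hz
  refine ⟨⁅a, b⁆ * (⁅X, t⁆ * ⁅U, V⁆) * (t * X * t⁻¹), mul_mem (mul_mem
      (commutatorElement_mem_commutator a b) (mul_mem (commutatorElement_mem_commutator X t)
        (commutatorElement_mem_commutator U V))) (Subgroup.Normal.conj_mem inferInstance X hX t),
    t • z, smul_le_smul_iff.mpr (hy.trans hz),
    t * (a * U) * t⁻¹, conj_mem_supportedIn (mul_mem (hty ha) (hyz hU)) t,
    t * (b * V) * t⁻¹, conj_mem_supportedIn (mul_mem (hty hb) (hyz hV)) t, ?_⟩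
  have hab : ⁅a, b⁆ * ⁅U, V⁆ = ⁅a * U, b * V⁆ := (commutatorElement_mul_mul_of_commute_s9
    (commute_of_mem_supportedIn ha hU le_rfl) (commute_of_mem_supportedIn ha hV le_rfl)
    (commute_of_mem_supportedIn hb hU le_rfl) (commute_of_mem_supportedIn hb hV le_rfl)).symm
  refine (mul_commutatorElement_mul_eq hK).trans ?_
  rw [hab]
  group

theorem exists_eq_commutatorElement_mul_commutatorElement [FaithfulSMul Γ I] {t : Γ} {y : I}
    (hy : y ≤ t • y) {f : Γ}
    (hf : f ∈ ⁅supportedIn Γ y (t • y), supportedIn Γ y (t • y)⁆) :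
    ∃ X ∈ commutator Γ, ∃ z, t • y ≤ z ∧ ∃ U ∈ supportedIn Γ (t • y) z,
      ∃ V ∈ supportedIn Γ (t • y) z, f = ⁅X, t⁆ * ⁅U, V⁆ := by
  have hle := Subgroup.commutator_le_self (supportedIn Γ y (t • y))
  rw [Subgroup.commutator_def] at hf hle
  induction hf using Subgroup.closure_induction_left with
  | one => exact ⟨1, one_mem _, t • y, le_rfl, 1, one_mem _, 1, one_mem _, by simp⟩
  | mul_left _ hc _ hg ih =>
    obtain ⟨a, ha, b, hb, rfl⟩ := hc
    obtain ⟨X, hX, z, hz, U, hU, V, hV, rfl⟩ := ih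
    exact exists_commutatorElement_mul_eq hy ha hb hX hz hU hV (hle hg)
  | inv_mul_cancel _ hc _ hg ih =>
    obtain ⟨a, ha, b, hb, rfl⟩ := hc
    obtain ⟨X, hX, z, hz, U, hU, V, hV, rfl⟩ := ih
    rw [commutatorElement_inv]
    exact exists_commutatorElement_mul_eq hy hb ha hX hz hU hV (hle hg)

theorem IsProximal.exists_commutatorElement_eq [FaithfulSMul Γ I] [NoMaxOrder I]
    [NoMinOrder I] (hprox : IsProximal Γ I) {U V : Γ} {y z : I} (hyz : y ≤ z)
    (hU : U ∈ supportedIn Γ y z) (hV : V ∈ supportedIn Γ y z) :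
    ∃ z', ∃ U' ∈ commutator Γ ⊓ supportedIn Γ y z', ∃ V' ∈ commutator Γ ⊓ supportedIn Γ y z',
      ⁅U', V'⁆ = ⁅U, V⁆ := by
  obtain ⟨k, hk⟩ := hprox.exists_lt_smul y z
  obtain ⟨l, hl⟩ := hprox.exists_lt_smul y (k • z)
  have hkz : k • y ≤ k • z := smul_le_smul_iff.mpr hyz
  have hlz : l • y ≤ l • z := smul_le_smul_iff.mpr hyz
  have hp := conj_mem_supportedIn (inv_mem hU) k
  have hq := conj_mem_supportedIn (inv_mem hV) l
  have hS : supportedIn Γ y z ≤ supportedIn Γ y (l • z) :=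
    supportedIn_mono le_rfl (hk.le.trans (hkz.trans (hl.le.trans hlz)))
  -- `k * U⁻¹ * k⁻¹` and `l * V⁻¹ * l⁻¹` have disjoint supports to the right of `z`, so they
  -- commute with `U`, `V` and with each other
  have hcomm := commutatorElement_mul_mul_of_commute_s9
    (commute_of_mem_supportedIn hU hp hk.le) (commute_of_mem_supportedIn hU hq (hk.le.trans
      (hkz.trans hl.le))) (commute_of_mem_supportedIn hV hp hk.le)
    (commute_of_mem_supportedIn hV hq (hk.le.trans (hkz.trans hl.le)))
  rw [(commute_of_mem_supportedIn hp hq hl.le).commutator_eq, mul_one] at hcomm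
  refine ⟨l • z, U * (k * U⁻¹ * k⁻¹), Subgroup.mem_inf.mpr ⟨?_, mul_mem (hS hU)
      (supportedIn_mono (hyz.trans hk.le) (hl.le.trans hlz) hp)⟩, V * (l * V⁻¹ * l⁻¹),
    Subgroup.mem_inf.mpr ⟨?_, mul_mem (hS hV)
      (supportedIn_mono (hyz.trans (hk.le.trans (hkz.trans hl.le))) le_rfl hq)⟩, hcomm⟩
  · rw [← mul_assoc, ← mul_assoc]
    exact commutatorElement_mem_commutator U k
  · rw [← mul_assoc, ← mul_assoc]
    exact commutatorElement_mem_commutator V l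

theorem isProdConj_six_of_lt_smul [FaithfulSMul Γ I] (hprox : IsProximal Γ I)
    (hbdd : ∀ g : Γ, ∃ a b : I, g ∈ supportedIn Γ a b) {h : Γ} {x : I} (hx : x < h • x) {f : Γ}
    (hf : f ∈ commutator Γ) :
    IsProdConj (commutator Γ) h 6 f := by
  have : Nontrivial I := ⟨⟨x, h • x, hx.ne⟩⟩
  have := hprox.noMaxOrder
  have := hprox.noMinOrder
  obtain ⟨A, B, hfAB⟩ := exists_mem_commutator_supportedIn hbdd hf
  obtain ⟨γ, hγ, hγA, hγB⟩ := hprox.exists_mem_commutator_smul_lt hbdd hx A B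
  have hT : (γ * h * γ⁻¹) • γ • x = γ • h • x := by simp only [mul_smul, inv_smul_smul]
  obtain ⟨X, hX, z, hz, U, hU, V, hV, rfl⟩ :=
    exists_eq_commutatorElement_mul_commutatorElement (hT ▸ (smul_lt_smul_iff.mpr hx).le)
      (commutator_supportedIn_mono hγA.le (hT ▸ hγB.le) hfAB)
  obtain ⟨z', U', hU', V', hV', hUV⟩ := hprox.exists_commutatorElement_eq hz hU hV
  rw [Subgroup.mem_inf] at hU' hV'
  obtain ⟨δ, hδ, hδx, hδz⟩ :=
    hprox.exists_mem_commutator_smul_lt hbdd hx ((γ * h * γ⁻¹) • γ • x) z'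
  have hcomm := commute_of_mem_supportedIn hU'.2 (conj_mem_supportedIn hV'.2 (δ * h * δ⁻¹))
    (hδz.trans (smul_lt_conj_smul hδx)).le
  rw [← hUV]
  exact (IsProdConj.commutatorElement_conj hX hγ).mul
    (IsProdConj.commutatorElement_of_commute hU'.1 hV'.1 hδ hcomm.symm)

end Monotone

end OrderAction

open OrderAction in
/-- If a group `Γ` acts faithfully by order-preserving bijections on a linear
order `I`, boundedly (supports lie in open intervals) and proximally, then the
commutator subgroup `Γ'` is 6-uniformly simple: every nontrivial `f ∈ Γ'` is a
product of at most 6 conjugates (by elements of `Γ'`) of any given nontrivial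
`h ∈ Γ'` or of `h⁻¹`. -/
theorem commutator_six_uniformly_simple_of_bounded_proximal
    {Γ : Type*} [Group Γ] {I : Type*} [LinearOrder I] [MulAction Γ I]
    (hord : ∀ g : Γ, ∀ x y : I, x ≤ y → g • x ≤ g • y)
    (hfaith : ∀ g : Γ, (∀ x : I, g • x = x) → g = 1)
    (hbounded : ∀ g : Γ, ∃ a b : I, ∀ x : I, g • x ≠ x → a < x ∧ x < b)
    (hprox : ∀ a b c d : I, a < b → c < d → ∃ g : Γ, g • a < c ∧ d < g • b) :
    ∀ f ∈ commutator Γ, f ≠ 1 → ∀ h ∈ commutator Γ, h ≠ 1 →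
      ∃ l : List Γ, l.length ≤ 6 ∧
        (∀ x ∈ l, ∃ γ ∈ commutator Γ, x = γ * h * γ⁻¹ ∨ x = γ * h⁻¹ * γ⁻¹) ∧
        l.prod = f := by
  intro f hf _ h _ hh1
  have : CovariantClass Γ I (· • ·) (· ≤ ·) := ⟨fun g _ _ => hord g _ _⟩
  have : FaithfulSMul Γ I := ⟨fun {g₁ g₂} h₁₂ => inv_mul_eq_one.mp <| hfaith _ fun x => by
    rw [mul_smul, ← h₁₂, inv_smul_smul]⟩
  obtain ⟨x, hx⟩ : ∃ x : I, h • x ≠ x := by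
    contrapose! hh1
    exact hfaith h hh1
  rcases hx.lt_or_gt with hlt | hgt
  · refine (isProdConj_six_of_lt_smul hprox hbounded (h := h⁻¹) (x := h • x) ?_ hf).of_inv
    rwa [inv_smul_smul]
  · exact isProdConj_six_of_lt_smul hprox hbounded hgt hf
end

section
/- Under the hypotheses above (Γ acts faithfully, order-preservingly, boundedly and proximally on a linear order), every element of the commutator subgroup Γ' is a product of at most two commutators of elements of Γ. -/
open scoped commutatorElement Pointwise

/-!
Every element of `Γ'` is a product of commutators of elements supported in one bounded
interval `J = (a, b)`. Proximality gives `φ` with `b < φ a`; then everything supported in `J`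
commutes with `φ k φ⁻¹` for every `k` supported in `(a, ∞)`. Inducting on the number of
commutators, such a product `f` is written as `[A, φ] · φ [U, V] φ⁻¹` with `U, V` supported
in `(a, ∞)`: a finite substitute for the identity `f = [∏ₙ φⁿ f φ⁻ⁿ, φ]`.
-/

section CommutatorAlgebra

variable {G : Type*} [Group G]

theorem commutatorElement_mul_mul_of_commute_s10 {x y u v : G} (hux : Commute u x)
    (huy : Commute u y) (hvx : Commute v x) (hvy : Commute v y) :
    ⁅x * u, y * v⁆ = ⁅x, y⁆ * ⁅u, v⁆ := by
  have hu : Commute u (x⁻¹ * y⁻¹) := hux.inv_right.mul_right huy.inv_right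
  have hv : Commute v (x⁻¹ * y⁻¹) := hvx.inv_right.mul_right hvy.inv_right
  have huv : Commute ⁅u, v⁆ (x⁻¹ * y⁻¹) :=
    ((hu.mul_left hv).mul_left hu.inv_left).mul_left hv.inv_left
  calc ⁅x * u, y * v⁆ = x * (u * y) * v * u⁻¹ * (x⁻¹ * v⁻¹) * y⁻¹ := by
        simp only [commutatorElement_def]; group
    _ = x * y * (⁅u, v⁆ * (x⁻¹ * y⁻¹)) := by
        rw [huy.eq, ← hvx.inv_inv.eq]; simp only [commutatorElement_def]; group
    _ = ⁅x, y⁆ * ⁅u, v⁆ := by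
        rw [huv.eq]; simp only [commutatorElement_def]; group

theorem mul_eq_commutatorElement_mul_conj {c F A Z φ : G} (hF : F = ⁅A, φ⁆ * Z)
    (hFZ : Commute F Z) :
    c * F = ⁅c * F * (φ * A * φ⁻¹), φ⁆ * (φ * (c * Z) * φ⁻¹) := by
  have hA : ⁅A, φ⁆ = Z⁻¹ * F := by rw [← hFZ.inv_right.eq, hF]; group
  calc c * F = c * F * φ * ⁅A, φ⁆ * F⁻¹ * Z * φ⁻¹ := by rw [hA]; group
    _ = _ := by simp only [commutatorElement_def]; group

theorem Subgroup.exists_eq_commutatorElement_mul_conj_commutatorElement {H K : Subgroup G}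
    {φ : G} (hHK : H ≤ K) (hK : ∀ k ∈ K, φ * k * φ⁻¹ ∈ K)
    (hcomm : ∀ h ∈ H, ∀ k ∈ K, Commute h (φ * k * φ⁻¹)) {g : G}
    (hg : g ∈ ⁅H, H⁆) :
    ∃ A : G, ∃ U ∈ K, ∃ V ∈ K, g = ⁅A, φ⁆ * (φ * ⁅U, V⁆ * φ⁻¹) := by
  let P (F : G) : Prop :=
    ∃ A : G, ∃ U ∈ K, ∃ V ∈ K, F = ⁅A, φ⁆ * (φ * ⁅U, V⁆ * φ⁻¹)
  have step : ∀ x ∈ H, ∀ y ∈ H, ∀ F ∈ ⁅H, H⁆, P F → P (⁅x, y⁆ * F) := by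
    rintro x hx y hy F hF ⟨A, U, hU, V, hV, hFeq⟩
    refine ⟨⁅x, y⁆ * F * (φ * A * φ⁻¹),
      x * (φ * U * φ⁻¹), K.mul_mem (hHK hx) (hK U hU),
      y * (φ * V * φ⁻¹), K.mul_mem (hHK hy) (hK V hV), ?_⟩
    rw [commutatorElement_mul_mul_of_commute_s10 (hcomm x hx U hU).symm (hcomm y hy U hU).symm
      (hcomm x hx V hV).symm (hcomm y hy V hV).symm, ← conjugate_commutatorElement]
    refine mul_eq_commutatorElement_mul_conj hFeq (hcomm F (commutator_le_self H hF) _ ?_)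
    exact commutator_le_self K (commutator_mem_commutator hU hV)
  induction hg using closure_induction_left with
  | one => exact ⟨1, 1, K.one_mem, 1, K.one_mem, by simp⟩
  | mul_left _ hs F hF ih =>
    obtain ⟨x, hx, y, hy, rfl⟩ := hs
    exact step x hx y hy F hF ih
  | inv_mul_cancel _ hs F hF ih =>
    obtain ⟨x, hx, y, hy, rfl⟩ := hs
    rw [commutatorElement_inv]
    exact step y hy x hx F hF ih

theorem exists_mem_commutator_of_directed {ι : Type*} {H : ι → Subgroup G}
    (hH : Directed (· ≤ ·) H) (hcover : ∀ g, ∃ i, g ∈ H i) {g : G}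
    (hg : g ∈ commutator G) :
    ∃ i, g ∈ ⁅H i, H i⁆ := by
  have : Nonempty ι := (hcover 1).nonempty
  have hdir : Directed (· ≤ ·) fun i => ⁅H i, H i⁆ :=
    hH.mono_comp (· ≤ ·) (g := fun K => ⁅K, K⁆) fun _ _ h => Subgroup.commutator_mono h h
  refine (Subgroup.mem_iSup_of_directed hdir).mp ?_
  rw [commutator_eq_closure] at hg
  refine (Subgroup.closure_le _).mpr ?_ hg
  rintro _ ⟨x, y, rfl⟩
  obtain ⟨i, hi⟩ := hcover x
  obtain ⟨j, hj⟩ := hcover y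
  obtain ⟨k, hik, hjk⟩ := hH i j
  exact Subgroup.mem_iSup_of_mem k (Subgroup.commutator_mem_commutator (hik hi) (hjk hj))

end CommutatorAlgebra

namespace MulAction

variable (G : Type*) {α : Type*} [Group G] [MulAction G α]

def rigidStabilizer (s : Set α) : Subgroup G where
  carrier := {g | (fixedBy α g)ᶜ ⊆ s}
  one_mem' := by simp [fixedBy_one_eq_univ]
  mul_mem' {g h} hg hh := calc
    (fixedBy α (g * h))ᶜ ⊆ (fixedBy α g ∩ fixedBy α h)ᶜ :=
      Set.compl_subset_compl.mpr (fixedBy_mul α g h)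
    _ = (fixedBy α g)ᶜ ∪ (fixedBy α h)ᶜ := Set.compl_inter _ _
    _ ⊆ s := Set.union_subset hg hh
  inv_mem' {g} hg := show (fixedBy α g⁻¹)ᶜ ⊆ s by rwa [fixedBy_inv]

variable {G}

theorem mem_rigidStabilizer {s : Set α} {g : G} :
    g ∈ rigidStabilizer G s ↔ ∀ x, g • x ≠ x → x ∈ s :=
  Iff.rfl

theorem rigidStabilizer_mono {s t : Set α} (hst : s ⊆ t) :
    rigidStabilizer G s ≤ rigidStabilizer G t :=
  fun _ hg => hg.trans hst

theorem conj_mem_rigidStabilizer_smul {s : Set α} {g : G} (φ : G)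
    (hg : g ∈ rigidStabilizer G s) : φ * g * φ⁻¹ ∈ rigidStabilizer G (φ • s) := by
  intro x hx
  rw [Set.mem_smul_set_iff_inv_smul_mem]
  refine hg fun h => hx ?_
  simp only [mem_fixedBy, mul_smul] at h ⊢
  rw [h, smul_inv_smul]

theorem nonempty_of_mem_rigidStabilizer_of_ne_one [FaithfulSMul G α] {s : Set α} {g : G}
    (hg : g ∈ rigidStabilizer G s) (hg1 : g ≠ 1) : s.Nonempty := by
  obtain ⟨x, hx⟩ : ∃ x : α, g • x ≠ x := by
    by_contra! h
    exact hg1 (faithfulSMul_iff.mp ‹_› g h)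
  exact ⟨x, hg hx⟩

theorem commute_of_mem_rigidStabilizer_of_disjoint [FaithfulSMul G α] {s t : Set α}
    (hst : Disjoint s t) {g h : G} (hg : g ∈ rigidStabilizer G s)
    (hh : h ∈ rigidStabilizer G t) : Commute g h := by
  have hgh : ∀ x, g • x ≠ x → h • x = x := fun x hx => by
    by_contra hx'
    exact Set.disjoint_left.mp hst (hg hx) (hh hx')
  have hhg : ∀ x, h • x ≠ x → g • x = x := fun x hx => by
    by_contra hx'
    exact Set.disjoint_left.mp hst (hg hx') (hh hx)
  refine eq_of_smul_eq_smul (α := α) fun x => ?_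
  rw [mul_smul, mul_smul]
  by_cases hgx : g • x = x
  · by_cases hhx : h • x = x
    · rw [hgx, hhx, hgx]
    · rw [hgx, hhg (h • x) (mt smul_mem_fixedBy_iff_mem_fixedBy.mp hhx)]
  · rw [hgh x hgx, hgh (g • x) (mt smul_mem_fixedBy_iff_mem_fixedBy.mp hgx)]

section LinearOrder

variable [LinearOrder α]

theorem directed_rigidStabilizer_Ioo :
    Directed (· ≤ ·) fun p : α × α => rigidStabilizer G (Set.Ioo p.1 p.2) := fun p q =>
  ⟨(min p.1 q.1, max p.2 q.2),
    rigidStabilizer_mono (Set.Ioo_subset_Ioo (min_le_left _ _) (le_max_left _ _)),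
    rigidStabilizer_mono (Set.Ioo_subset_Ioo (min_le_right _ _) (le_max_right _ _))⟩

theorem smul_Ioi_subset_Ioi {φ : G} (hφ : Monotone (φ • · : α → α)) (a : α) :
    φ • Set.Ioi a ⊆ Set.Ioi (φ • a) :=
  Set.smul_set_subset_iff.mpr fun _ hx => hφ.strictMono_of_injective (MulAction.injective φ) hx

theorem exists_lt_smul_of_proximal
    (hprox : ∀ a b c d : α, a < b → c < d → ∃ g : G, g • a < c ∧ d < g • b)
    {a b : α} (hab : a < b) : ∃ φ : G, b < φ • a := by
  obtain ⟨g, hga, -⟩ := hprox a b a b hab hab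
  obtain ⟨φ, -, hφ⟩ := hprox (g • a) a (g • a) b hga (hga.trans hab)
  exact ⟨φ, hφ⟩

theorem exists_eq_commutatorElement_mul_commutatorElement [FaithfulSMul G α] {φ : G}
    (hφ : Monotone (φ • · : α → α)) {a b : α} (hab : a ≤ b) (hbφa : b ≤ φ • a)
    {g : G} (hg : g ∈ ⁅rigidStabilizer G (Set.Ioo a b), rigidStabilizer G (Set.Ioo a b)⁆) :
    ∃ A B C D : G, g = ⁅A, B⁆ * ⁅C, D⁆ := by
  have hconj : ∀ k ∈ rigidStabilizer G (Set.Ioi a),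
      φ * k * φ⁻¹ ∈ rigidStabilizer G (Set.Ioi (φ • a)) := fun k hk =>
    rigidStabilizer_mono (smul_Ioi_subset_Ioi hφ a) (conj_mem_rigidStabilizer_smul φ hk)
  have hdisj : Disjoint (Set.Ioo a b) (Set.Ioi (φ • a)) :=
    Set.disjoint_left.mpr fun x hx hx' => lt_asymm (hx.2.trans_le hbφa) hx'
  obtain ⟨A, U, -, V, -, rfl⟩ := Subgroup.exists_eq_commutatorElement_mul_conj_commutatorElement
    (rigidStabilizer_mono Set.Ioo_subset_Ioi_self)
    (fun k hk => rigidStabilizer_mono (Set.Ioi_subset_Ioi (hab.trans hbφa)) (hconj k hk))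
    (fun h hh k hk => commute_of_mem_rigidStabilizer_of_disjoint hdisj hh (hconj k hk)) hg
  exact ⟨A, φ, φ * U * φ⁻¹, φ * V * φ⁻¹, by rw [conjugate_commutatorElement]⟩

end LinearOrder

end MulAction

/-- If a group `Γ` acts faithfully by order-preserving bijections on a linear
order `I`, boundedly and proximally, then every element of the commutator
subgroup `Γ'` is a product of at most two commutators of elements of `Γ`. -/
theorem commutator_width_two_of_bounded_proximal
    {Γ : Type*} [Group Γ] {I : Type*} [LinearOrder I] [MulAction Γ I]
    (hord : ∀ g : Γ, ∀ x y : I, x ≤ y → g • x ≤ g • y)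
    (hfaith : ∀ g : Γ, (∀ x : I, g • x = x) → g = 1)
    (hbounded : ∀ g : Γ, ∃ a b : I, ∀ x : I, g • x ≠ x → a < x ∧ x < b)
    (hprox : ∀ a b c d : I, a < b → c < d → ∃ g : Γ, g • a < c ∧ d < g • b) :
    ∀ f ∈ commutator Γ, ∃ a b c d : Γ, f = ⁅a, b⁆ * ⁅c, d⁆ := by
  intro f hf
  have : FaithfulSMul Γ I := faithfulSMul_iff.mpr hfaith
  obtain ⟨⟨a, b⟩, hfab⟩ :=
    exists_mem_commutator_of_directed MulAction.directed_rigidStabilizer_Ioo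
      (fun g => let ⟨a, b, hg⟩ := hbounded g
        ⟨(a, b), MulAction.mem_rigidStabilizer.mpr hg⟩) hf
  rcases eq_or_ne f 1 with rfl | hf1
  · exact ⟨1, 1, 1, 1, by simp⟩
  obtain ⟨x, hax, hxb⟩ :=
    MulAction.nonempty_of_mem_rigidStabilizer_of_ne_one (Subgroup.commutator_le_self _ hfab) hf1
  have hab : a < b := hax.trans hxb
  obtain ⟨φ, hφ⟩ := MulAction.exists_lt_smul_of_proximal hprox hab
  exact MulAction.exists_eq_commutatorElement_mul_commutatorElement (hord φ) hab.le hφ.le hfab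
end

section
/- Every proximal order-preserving group action on a linear order (I,≤) is order-primitive: for any linear order (J,≤), group homomorphism Ψ: Γ → Aut(J,≤), and order-preserving Γ-equivariant map ψ: I → J, either ψ is injective or ψ(I) is a singleton. -/
/-!
The fibres of a monotone equivariant map `ψ` are convex and are permuted by `Γ`. If one fibre
contains two points `a < b`, proximality moves `[a, b]` over any interval `[x, y]` into a single
fibre, so by convexity `ψ x = ψ y`.
-/

def IsProximal (Γ I : Type*) [LinearOrder I] [SMul Γ I] : Prop :=
  ∀ a b c d : I, a < b → c < d → ∃ g : Γ, g • a < c ∧ d < g • b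

namespace IsProximal

variable {Γ I J : Type*} [LinearOrder I] [SMul Γ I] [PartialOrder J]

theorem apply_eq_apply_of_lt (hprox : IsProximal Γ I) {ψ : I → J} (hψ : Monotone ψ)
    (hinv : ∀ (g : Γ) (a b : I), ψ a = ψ b → ψ (g • a) = ψ (g • b))
    {a b : I} (hab : a < b) (hψab : ψ a = ψ b) {x y : I} (hxy : x < y) : ψ x = ψ y := by
  obtain ⟨g, hga, hgb⟩ := hprox a b x y hab hxy
  refine le_antisymm (hψ hxy.le) ?_
  calc ψ y ≤ ψ (g • b) := hψ hgb.le
    _ = ψ (g • a) := (hinv g a b hψab).symm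
    _ ≤ ψ x := hψ hga.le

theorem injective_or_const (hprox : IsProximal Γ I) {ψ : I → J} (hψ : Monotone ψ)
    (hinv : ∀ (g : Γ) (a b : I), ψ a = ψ b → ψ (g • a) = ψ (g • b)) :
    Function.Injective ψ ∨ ∃ j : J, ∀ x : I, ψ x = j := by
  refine or_iff_not_imp_left.2 fun hnotinj => ?_
  obtain ⟨a, b, hψab, hab⟩ := Function.not_injective_iff.1 hnotinj
  obtain ⟨a, b, hab, hψab⟩ : ∃ a b : I, a < b ∧ ψ a = ψ b := by
    rcases hab.lt_or_gt with h | h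
    exacts [⟨a, b, h, hψab⟩, ⟨b, a, h, hψab.symm⟩]
  refine ⟨ψ a, fun x => ?_⟩
  rcases lt_trichotomy x a with h | rfl | h
  · exact hprox.apply_eq_apply_of_lt hψ hinv hab hψab h
  · rfl
  · exact (hprox.apply_eq_apply_of_lt hψ hinv hab hψab h).symm

end IsProximal

theorem proximal_implies_primitive_general
    {Γ : Type*} [Group Γ] {I : Type u_1} [LinearOrder I] [MulAction Γ I]
    (hprox : ∀ a b c d : I, a < b → c < d → ∃ g : Γ, g • a < c ∧ d < g • b) :
    ∀ (J : Type u_1) [inst : LinearOrder J] (Ψ : Γ →* (J ≃o J)) (ψ : I → J),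
      Monotone ψ → (∀ (γ : Γ) (x : I), ψ (γ • x) = Ψ γ (ψ x)) →
      Function.Injective ψ ∨ ∃ j : J, ∀ x : I, ψ x = j := by
  intro J _ Ψ ψ hψ hequiv
  refine IsProximal.injective_or_const (Γ := Γ) hprox hψ fun g a b h => ?_
  rw [hequiv, hequiv, h]

/-- Every proximal order-preserving action of a group `Γ` on a linear order `I`
is order-primitive: any order-preserving `Γ`-equivariant map from `I` to another
linearly ordered `Γ`-set `J` is injective or has singleton image. -/
theorem proximal_implies_primitive
    {Γ : Type*} [Group Γ] {I : Type u_1} [LinearOrder I] [MulAction Γ I]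
    (hord : ∀ g : Γ, ∀ x y : I, x ≤ y → g • x ≤ g • y)
    (hprox : ∀ a b c d : I, a < b → c < d → ∃ g : Γ, g • a < c ∧ d < g • b) :
    ∀ (J : Type u_1) [inst : LinearOrder J] (Ψ : Γ →* (J ≃o J)) (ψ : I → J),
      Monotone ψ → (∀ (γ : Γ) (x : I), ψ (γ • x) = Ψ γ (ψ x)) →
      Function.Injective ψ ∨ ∃ j : J, ∀ x : I, ψ x = j :=
  proximal_implies_primitive_general hprox
end

section
/- Let Γ = 𝔽(Γ) be a topological full group acting faithfully and extremely proximally on a Cantor set C. Then the commutator subgroup Γ' also acts extremely proximally on C: for any nonempty proper clopen sets U, V ⊊ C there exists g ∈ Γ' with g(U) ⊊ V. -/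
variable {C : Type*}

/-- The group of self-homeomorphisms of a space, with `g * h = h.trans g`
(i.e. `(g * h) x = g (h x)`). -/
instance homeoGroup [TopologicalSpace C] : Group (C ≃ₜ C) where
  mul g h := h.trans g
  one := Homeomorph.refl C
  inv := Homeomorph.symm
  mul_assoc _ _ _ := rfl
  one_mul _ := rfl
  mul_one _ := rfl
  inv_mul_cancel g := by ext x; exact g.symm_apply_apply x

/-- `Γ` is a topological full group: any homeomorphism which locally agrees with
elements of `Γ` belongs to `Γ`. -/
def IsTopologicalFullGroup [TopologicalSpace C] (Γ : Subgroup (C ≃ₜ C)) : Prop :=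
  ∀ g : C ≃ₜ C,
    (∀ x : C, ∃ U : Set C, IsOpen U ∧ x ∈ U ∧ ∃ γ ∈ Γ, ∀ y ∈ U, g y = γ y) →
    g ∈ Γ

/-- A set `A` of homeomorphisms acts extremely proximally: any nonempty proper
clopen set can be mapped strictly inside any other nonempty proper clopen set. -/
def ExtremelyProximal [TopologicalSpace C] (A : Set (C ≃ₜ C)) : Prop :=
  ∀ U V : Set C, IsClopen U → IsClopen V → U.Nonempty → V.Nonempty →
    U ≠ Set.univ → V ≠ Set.univ → ∃ g ∈ A, g '' U ⊂ V

/-!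
Given disjoint nonempty clopen sets `U` and `T`, pick `g ∈ Γ` with `g '' U ⊂ T`. Since `Γ` is a
topological full group, the involution `σ` exchanging `U` and `g '' U` via `g` and fixing the
rest lies in `Γ`. Moving its support `U ∪ g '' U` off `U` by some `h ∈ Γ`, the commutator
`⁅σ, h⁆` agrees with `σ`, hence with `g`, on `U`. For arbitrary `U` and `V`, extreme proximality
splits `V` into two disjoint nonempty clopen pieces, and one of them, `W`, leaves room for a
nonempty clopen `T` disjoint from both `U` and `W`; two commutators then carry `U` into `T` and
`T` into `W ⊆ V`.
-/

open Set
open scoped commutatorElement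

lemma Set.ne_univ_of_disjoint {α : Type*} {U T : Set α} (hU : U.Nonempty) (hUT : Disjoint U T) :
    T ≠ univ := by
  rintro rfl
  exact hU.ne_empty (disjoint_univ.mp hUT)

section
variable [TopologicalSpace C]

lemma homeoGroup_coe_mul (g h : C ≃ₜ C) : ⇑(g * h) = g ∘ h := rfl

lemma IsClopen.homeomorph_image {U : Set C} (hU : IsClopen U) (g : C ≃ₜ C) :
    IsClopen (g '' U) :=
  ⟨g.isClosedMap U hU.1, g.isOpenMap U hU.2⟩

lemma commutatorElement_apply_of_notMem_image {σ h : C ≃ₜ C} {S : Set C}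
    (hσ : ∀ y ∉ S, σ y = y) {x : C} (hx : x ∉ h '' S) : ⁅σ, h⁆ x = σ x := by
  have hy : h.symm x ∉ S := fun hS => hx ⟨_, hS, h.apply_symm_apply x⟩
  have hσy : σ.symm (h.symm x) = h.symm x := σ.symm_apply_eq.mpr (hσ _ hy).symm
  show σ (h (σ.symm (h.symm x))) = σ x
  rw [hσy, h.apply_symm_apply]

open scoped Classical in
noncomputable def swapAlong (g : C ≃ₜ C) (U : Set C) : C → C :=
  U.piecewise g ((g '' U).piecewise g.symm id)

section swapAlong
open scoped Classical
variable {g : C ≃ₜ C} {U : Set C} {x : C}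

lemma swapAlong_of_mem (hx : x ∈ U) : swapAlong g U x = g x :=
  piecewise_eq_of_mem _ _ _ hx

lemma swapAlong_of_mem_image (hd : Disjoint U (g '' U)) (hx : x ∈ g '' U) :
    swapAlong g U x = g.symm x := by
  rw [swapAlong, piecewise_eq_of_notMem _ _ _ (disjoint_right.mp hd hx),
    piecewise_eq_of_mem _ _ _ hx]

lemma swapAlong_of_notMem (hxU : x ∉ U) (hxgU : x ∉ g '' U) : swapAlong g U x = x := by
  rw [swapAlong, piecewise_eq_of_notMem _ _ _ hxU, piecewise_eq_of_notMem _ _ _ hxgU, id]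

lemma swapAlong_involutive (hd : Disjoint U (g '' U)) : Function.Involutive (swapAlong g U) := by
  intro x
  by_cases hxU : x ∈ U
  · rw [swapAlong_of_mem hxU, swapAlong_of_mem_image hd (mem_image_of_mem g hxU),
      g.symm_apply_apply]
  by_cases hxgU : x ∈ g '' U
  · have hgx : g.symm x ∈ U := by
      obtain ⟨y, hy, rfl⟩ := hxgU
      rwa [g.symm_apply_apply]
    rw [swapAlong_of_mem_image hd hxgU, swapAlong_of_mem hgx, g.apply_symm_apply]
  · rw [swapAlong_of_notMem hxU hxgU, swapAlong_of_notMem hxU hxgU]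

lemma continuous_swapAlong (hU : IsClopen U) : Continuous (swapAlong g U) :=
  g.continuous.piecewise (by simp [hU.frontier_eq]) <|
    g.symm.continuous.piecewise (by simp [(hU.homeomorph_image g).frontier_eq]) continuous_id

noncomputable def swapHomeomorph (hU : IsClopen U) (hd : Disjoint U (g '' U)) : C ≃ₜ C where
  toEquiv := (swapAlong_involutive hd).toPerm
  continuous_toFun := continuous_swapAlong hU
  continuous_invFun := continuous_swapAlong hU

lemma swapHomeomorph_mem {Γ : Subgroup (C ≃ₜ C)} (hfull : IsTopologicalFullGroup Γ)
    (hg : g ∈ Γ) (hU : IsClopen U) (hd : Disjoint U (g '' U)) : swapHomeomorph hU hd ∈ Γ := by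
  refine hfull _ fun x => ?_
  by_cases hxU : x ∈ U
  · exact ⟨U, hU.isOpen, hxU, g, hg, fun y hy => swapAlong_of_mem hy⟩
  by_cases hxgU : x ∈ g '' U
  · exact ⟨g '' U, (hU.homeomorph_image g).isOpen, hxgU, g⁻¹, inv_mem hg,
      fun y hy => swapAlong_of_mem_image hd hy⟩
  · refine ⟨(U ∪ g '' U)ᶜ, (hU.union (hU.homeomorph_image g)).compl.isOpen,
      by simp [hxU, hxgU], 1, one_mem Γ, fun y hy => ?_⟩
    simp only [mem_compl_iff, mem_union, not_or] at hy
    exact swapAlong_of_notMem hy.1 hy.2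

end swapAlong

lemma exists_commutator_image_ssubset_of_disjoint {Γ : Subgroup (C ≃ₜ C)}
    (hfull : IsTopologicalFullGroup Γ) (hprox : ExtremelyProximal (Γ : Set (C ≃ₜ C)))
    {U T : Set C} (hU : IsClopen U) (hT : IsClopen T) (hUne : U.Nonempty) (hTne : T.Nonempty)
    (hUT : Disjoint U T) : ∃ c ∈ ⁅Γ, Γ⁆, c '' U ⊂ T := by
  obtain ⟨g, hgΓ, hgU⟩ := hprox U T hU hT hUne hTne (ne_univ_of_disjoint hTne hUT.symm)
    (ne_univ_of_disjoint hUne hUT)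
  have hd : Disjoint U (g '' U) := hUT.mono_right hgU.subset
  set σ := swapHomeomorph hU hd
  have hσ : ∀ y ∉ U ∪ g '' U, σ y = y := fun y hy =>
    swapAlong_of_notMem (fun h => hy (Or.inl h)) (fun h => hy (Or.inr h))
  have hSp : U ∪ g '' U ≠ univ := by
    obtain ⟨t, htT, htgU⟩ := exists_of_ssubset hgU
    exact (ne_univ_iff_exists_notMem _).mpr
      ⟨t, fun ht => ht.elim (disjoint_left.mp hUT · htT) htgU⟩
  obtain ⟨h, hhΓ, hhS⟩ := hprox (U ∪ g '' U) Uᶜ (hU.union (hU.homeomorph_image g)) hU.compl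
    (hUne.mono subset_union_left) (nonempty_compl.mpr (ne_univ_of_disjoint hTne hUT.symm))
    hSp (compl_ne_univ.mpr hUne)
  have hσΓ : σ ∈ Γ := swapHomeomorph_mem hfull hgΓ hU hd
  refine ⟨⁅σ, h⁆, Subgroup.commutator_mem_commutator hσΓ hhΓ, ?_⟩
  have hcomm : (⁅σ, h⁆ : C ≃ₜ C) '' U = g '' U := image_congr fun x hx =>
    (commutatorElement_apply_of_notMem_image hσ fun hx' => hhS.subset hx' hx).trans
      (swapAlong_of_mem hx)
  rwa [hcomm]

lemma ExtremelyProximal.exists_clopen_disjoint_of_subset {A : Set (C ≃ₜ C)}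
    (hprox : ExtremelyProximal A) {U V : Set C} (hU : IsClopen U) (hUp : U ≠ univ)
    (hV : IsClopen V) (hVne : V.Nonempty) (hVp : V ≠ univ) :
    ∃ T W : Set C, IsClopen T ∧ IsClopen W ∧ T.Nonempty ∧ W.Nonempty ∧ W ⊆ V ∧
      Disjoint U T ∧ Disjoint T W := by
  obtain ⟨g, -, hgV⟩ := hprox V V hV hV hVne hVne hVp hVp
  obtain ⟨q, hqU⟩ := nonempty_compl.mpr hUp
  obtain ⟨W, hW, hWne, hWV, hqW⟩ : ∃ W, IsClopen W ∧ W.Nonempty ∧ W ⊆ V ∧ q ∉ W := by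
    by_cases hqgV : q ∈ g '' V
    · exact ⟨V \ g '' V, hV.diff (hV.homeomorph_image g), nonempty_of_ssubset hgV,
        sdiff_subset, fun h => h.2 hqgV⟩
    · exact ⟨g '' V, hV.homeomorph_image g, hVne.image g, hgV.subset, hqgV⟩
  exact ⟨Uᶜ ∩ Wᶜ, W, hU.compl.inter hW.compl, hW, ⟨q, hqU, hqW⟩, hWne, hWV,
    disjoint_compl_right.mono_right inter_subset_left,
    disjoint_compl_left.mono_left inter_subset_right⟩

end

theorem commutator_extremely_proximal_general [TopologicalSpace C]
    (Γ : Subgroup (C ≃ₜ C))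
    (hfull : IsTopologicalFullGroup Γ) (hprox : ExtremelyProximal (Γ : Set (C ≃ₜ C))) :
    ExtremelyProximal ((⁅Γ, Γ⁆ : Subgroup (C ≃ₜ C)) : Set (C ≃ₜ C)) := by
  intro U V hU hV hUne hVne hUp hVp
  obtain ⟨T, W, hT, hW, hTne, hWne, hWV, hUT, hTW⟩ :=
    hprox.exists_clopen_disjoint_of_subset hU hUp hV hVne hVp
  obtain ⟨c₁, hc₁, hc₁U⟩ :=
    exists_commutator_image_ssubset_of_disjoint hfull hprox hU hT hUne hTne hUT
  obtain ⟨c₂, hc₂, hc₂T⟩ :=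
    exists_commutator_image_ssubset_of_disjoint hfull hprox hT hW hTne hWne hTW
  refine ⟨c₂ * c₁, mul_mem hc₂ hc₁, ?_⟩
  calc (c₂ * c₁) '' U = c₂ '' (c₁ '' U) := by rw [homeoGroup_coe_mul, image_comp]
    _ ⊆ c₂ '' T := image_mono hc₁U.subset
    _ ⊂ W := hc₂T
    _ ⊆ V := hWV

/-- If a topological full group `Γ` acts (faithfully) extremely proximally on a
Cantor set `C`, then so does its commutator subgroup `Γ' = ⁅Γ,Γ⁆`. -/
theorem commutator_extremely_proximal [TopologicalSpace C]
    (hC : Nonempty (C ≃ₜ (ℕ → Bool))) (Γ : Subgroup (C ≃ₜ C))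
    (hfull : IsTopologicalFullGroup Γ) (hprox : ExtremelyProximal (Γ : Set (C ≃ₜ C))) :
    ExtremelyProximal ((⁅Γ, Γ⁆ : Subgroup (C ≃ₜ C)) : Set (C ≃ₜ C)) :=
  commutator_extremely_proximal_general Γ hfull hprox
end

section
/- Let Γ be a topological full group acting faithfully and extremely proximally on a Cantor set C. For any two nontrivial f, g ∈ Γ there exists h ∈ Γ' such that (hgh⁻¹)·f acts as the identity on some nonempty clopen subset of C. -/
variable {C : Type*}

/-!
Pick a clopen `U` moved off itself by `f` and a clopen `W` moved off itself by `g⁻¹`, with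
`U ∪ f U` disjoint from `W ∪ g⁻¹ W`, and use extreme proximality to get `a ∈ Γ` with `a U ⊊ W`.
The element `s ∈ Γ` exchanging `U` with `a U` through `a`, and `f U` with `g⁻¹ a U` through
`g⁻¹ a f⁻¹`, satisfies `s g s⁻¹ f = 1` on `U`. It is supported in a proper clopen set `S`
(the points of `W \ a U` lie outside), so some `t ∈ Γ` maps `S` into its complement; then the
commutator `⁅s, t⁆ ∈ Γ'` agrees with `s` on `S`, which is all the computation uses.
-/

open Set

open scoped commutatorElement

theorem Homeomorph.isClopen_image {X Y : Type*} [TopologicalSpace X] [TopologicalSpace Y]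
    (h : X ≃ₜ Y) {s : Set X} : IsClopen (h '' s) ↔ IsClopen s :=
  and_congr h.isClosed_image h.isOpen_image

section Topology

variable [TopologicalSpace C]

/-- An isolated point `x` would give the clopen set `{x}`, which cannot be mapped strictly
inside itself. -/
theorem ExtremelyProximal.perfectSpace [T1Space C] [Nontrivial C] {A : Set (C ≃ₜ C)}
    (hA : ExtremelyProximal A) : PerfectSpace C := by
  refine perfectSpace_iff_forall_not_isolated.2 fun x => ⟨fun hx => ?_⟩
  rw [← isOpen_singleton_iff_punctured_nhds] at hx
  obtain ⟨γ, -, hγ⟩ := hA {x} {x} ⟨isClosed_singleton, hx⟩ ⟨isClosed_singleton, hx⟩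
    (singleton_nonempty x) (singleton_nonempty x) (singleton_ne_univ x) (singleton_ne_univ x)
  rw [image_singleton, ssubset_singleton_iff] at hγ
  exact singleton_ne_empty _ hγ

theorem Homeomorph.exists_apply_ne_notMem_of_finite [T2Space C] [PerfectSpace C]
    {g : C ≃ₜ C} (hg : g ≠ 1) {F : Set C} (hF : F.Finite) : ∃ y, g y ≠ y ∧ y ∉ F := by
  have hopen : IsOpen {y | g y ≠ y} := (isClosed_eq g.continuous continuous_id).isOpen_compl
  obtain ⟨y, hy⟩ := DFunLike.ne_iff.1 hg
  obtain ⟨z, hz, -, hzF⟩ := (dense_univ.sdiff_finite hF).inter_open_nonempty _ hopen ⟨y, hy⟩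
  exact ⟨z, hz, hzF⟩

variable [CompactSpace C] [T2Space C] [TotallyDisconnectedSpace C]

theorem Homeomorph.exists_isClopen_disjoint_image_subset (g : C ≃ₜ C) {y : C} (hy : g y ≠ y)
    {O : Set C} (hO : IsOpen O) (hyO : y ∈ O) (hgyO : g y ∈ O) :
    ∃ W, IsClopen W ∧ y ∈ W ∧ Disjoint W (g '' W) ∧ W ∪ g '' W ⊆ O := by
  obtain ⟨K, hK, hyK, hKO⟩ := compact_exists_isClopen_in_isOpen
    ((hO.inter (hO.preimage g.continuous)).inter isOpen_compl_singleton) ⟨⟨hyO, hgyO⟩, hy.symm⟩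
  refine ⟨K ∩ g ⁻¹' Kᶜ, hK.inter (hK.compl.preimage g.continuous),
    ⟨hyK, fun hgyK => (hKO hgyK).2 rfl⟩, ?_, ?_⟩
  · exact disjoint_left.2 fun z hz ⟨w, hw, hwz⟩ => hw.2 (hwz ▸ hz.1)
  · rintro _ (hz | ⟨w, hw, rfl⟩)
    exacts [(hKO hz.1).1.1, (hKO hw.1).1.2]

theorem exists_isClopen_disjoint_images [PerfectSpace C] {f g : C ≃ₜ C} (hf : f ≠ 1)
    (hg : g ≠ 1) :
    ∃ U W : Set C, IsClopen U ∧ IsClopen W ∧ U.Nonempty ∧ W.Nonempty ∧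
      Disjoint U (f '' U) ∧ Disjoint W (g '' W) ∧ Disjoint (U ∪ f '' U) (W ∪ g '' W) := by
  obtain ⟨x, hx⟩ := DFunLike.ne_iff.1 hf
  set P : Set C := {x, f x}
  have hP : P.Finite := toFinite P
  obtain ⟨y, hy, hyP⟩ := g.exists_apply_ne_notMem_of_finite hg
    (hP.union (hP.preimage g.injective.injOn))
  rw [mem_union, not_or] at hyP
  obtain ⟨W, hW, hyW, hWg, hWP⟩ :=
    g.exists_isClopen_disjoint_image_subset hy hP.isClosed.isOpen_compl hyP.1 hyP.2
  have hWP' : Disjoint P (W ∪ g '' W) := subset_compl_iff_disjoint_left.1 hWP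
  obtain ⟨U, hU, hxU, hUf, hUW⟩ := f.exists_isClopen_disjoint_image_subset hx
    (hW.union (g.isClopen_image.2 hW)).compl.isOpen
    (disjoint_left.1 hWP' (mem_insert _ _)) (disjoint_left.1 hWP' (mem_insert_of_mem _ rfl))
  exact ⟨U, W, hU, hW, ⟨x, hxU⟩, ⟨y, hyW⟩, hUf, hWg, subset_compl_iff_disjoint_right.1 hUW⟩

end Topology

section FullGroup

variable [TopologicalSpace C]

open scoped Classical

noncomputable def swapFun (γ : C ≃ₜ C) (K : Set C) : C → C :=
  K.piecewise γ ((γ '' K).piecewise γ.symm id)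

variable {γ : C ≃ₜ C} {K : Set C}

theorem swapFun_of_mem {x : C} (hx : x ∈ K) : swapFun γ K x = γ x :=
  piecewise_eq_of_mem _ _ _ hx

theorem swapFun_of_mem_image (hd : Disjoint K (γ '' K)) {x : C} (hx : x ∈ γ '' K) :
    swapFun γ K x = γ.symm x := by
  rw [swapFun, piecewise_eq_of_notMem _ _ _ (disjoint_right.1 hd hx),
    piecewise_eq_of_mem _ _ _ hx]

theorem swapFun_of_notMem {x : C} (hx : x ∉ K ∪ γ '' K) : swapFun γ K x = x := by
  rw [mem_union, not_or] at hx
  rw [swapFun, piecewise_eq_of_notMem _ _ _ hx.1, piecewise_eq_of_notMem _ _ _ hx.2, id]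

theorem swapFun_involutive (hd : Disjoint K (γ '' K)) : Function.Involutive (swapFun γ K) := by
  intro x
  by_cases hxK : x ∈ K
  · rw [swapFun_of_mem hxK, swapFun_of_mem_image hd (mem_image_of_mem γ hxK),
      γ.symm_apply_apply]
  by_cases hxγK : x ∈ γ '' K
  · obtain ⟨y, hy, rfl⟩ := hxγK
    rw [swapFun_of_mem_image hd (mem_image_of_mem γ hy), γ.symm_apply_apply, swapFun_of_mem hy]
  · have hx : x ∉ K ∪ γ '' K := by simp only [mem_union, not_or]; exact ⟨hxK, hxγK⟩
    rw [swapFun_of_notMem hx, swapFun_of_notMem hx]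

theorem continuous_swapFun (hK : IsClopen K) : Continuous (swapFun γ K) := by
  refine Continuous.piecewise (by simp [hK.frontier_eq]) γ.continuous ?_
  exact Continuous.piecewise (by simp [(γ.isClopen_image.2 hK).frontier_eq])
    γ.symm.continuous continuous_id

theorem IsTopologicalFullGroup.exists_mem_swap {Γ : Subgroup (C ≃ₜ C)}
    (hΓ : IsTopologicalFullGroup Γ) (hγ : γ ∈ Γ) (hK : IsClopen K) (hd : Disjoint K (γ '' K)) :
    ∃ s ∈ Γ, (∀ x ∉ K ∪ γ '' K, s x = x) ∧ ∀ x ∈ K, s (γ x) = x := by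
  let s : C ≃ₜ C := ⟨(swapFun_involutive hd).toPerm, continuous_swapFun hK, continuous_swapFun hK⟩
  have hγK : IsClopen (γ '' K) := γ.isClopen_image.2 hK
  refine ⟨s, hΓ s fun x => ?_, fun x => swapFun_of_notMem, fun x hx => ?_⟩
  · by_cases hxK : x ∈ K
    · exact ⟨K, hK.isOpen, hxK, γ, hγ, fun y => swapFun_of_mem⟩
    by_cases hxγK : x ∈ γ '' K
    · exact ⟨γ '' K, hγK.isOpen, hxγK, γ⁻¹, inv_mem hγ, fun y => swapFun_of_mem_image hd⟩
    · exact ⟨(K ∪ γ '' K)ᶜ, (hK.union hγK).compl.isOpen, by simp [hxK, hxγK], 1, one_mem Γ,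
        fun y => swapFun_of_notMem⟩
  · exact (swapFun_of_mem_image hd (mem_image_of_mem γ hx)).trans (γ.symm_apply_apply x)

theorem IsTopologicalFullGroup.exists_mem_swap_swap {Γ : Subgroup (C ≃ₜ C)}
    (hΓ : IsTopologicalFullGroup Γ) {a b : C ≃ₜ C} (ha : a ∈ Γ) (hb : b ∈ Γ) {U V : Set C}
    (hU : IsClopen U) (hV : IsClopen V) (hUV : Disjoint U V)
    (hUV_ab : Disjoint (U ∪ V) (a '' U ∪ b '' V)) (hab : Disjoint (a '' U) (b '' V)) :
    ∃ s ∈ Γ, (∀ x ∉ (U ∪ a '' U) ∪ (V ∪ b '' V), s x = x) ∧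
      (∀ x ∈ U, s (a x) = x) ∧ ∀ x ∈ V, s (b x) = x := by
  obtain ⟨⟨hU_aU, hV_aU⟩, hU_bV, hV_bV⟩ := by
    simpa only [disjoint_union_left, disjoint_union_right] using hUV_ab
  have hsupp : Disjoint (U ∪ a '' U) (V ∪ b '' V) := by
    simp only [disjoint_union_left, disjoint_union_right]
    exact ⟨⟨hUV, hV_aU.symm⟩, hU_bV, hab⟩
  obtain ⟨s, hs, hs_supp, hs_a⟩ := hΓ.exists_mem_swap ha hU hU_aU
  obtain ⟨t, ht, ht_supp, ht_b⟩ := hΓ.exists_mem_swap hb hV hV_bV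
  refine ⟨s * t, mul_mem hs ht, fun x hx => ?_, fun x hx => ?_, fun x hx => ?_⟩
  · rw [Homeomorph.mul_apply, ht_supp x (not_or.1 hx).2, hs_supp x (not_or.1 hx).1]
  · have hax : a x ∉ V ∪ b '' V := disjoint_left.1 hsupp (Or.inr (mem_image_of_mem a hx))
    rw [Homeomorph.mul_apply, ht_supp _ hax, hs_a x hx]
  · rw [Homeomorph.mul_apply, ht_b x hx, hs_supp x (disjoint_right.1 hsupp (Or.inl hx))]

end FullGroup

section Commutator

variable [TopologicalSpace C]

/-- `⁅s, t⁆ = s * (t * s⁻¹ * t⁻¹)`, and the second factor is supported in `t '' S`. -/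
theorem commutatorElement_apply_of_mem {s t : C ≃ₜ C} {S : Set C} (hs : ∀ x ∉ S, s x = x)
    (hst : Disjoint S (t '' S)) {x : C} (hx : x ∈ S) : ⁅s, t⁆ x = s x := by
  have htx : t.symm x ∉ S := fun h => disjoint_left.1 hst hx ⟨_, h, t.apply_symm_apply x⟩
  have hstx : s.symm (t.symm x) = t.symm x := s.symm_apply_eq.2 (hs _ htx).symm
  simp only [commutatorElement_def, Homeomorph.mul_apply, Homeomorph.inv_apply, hstx,
    t.apply_symm_apply]

theorem ExtremelyProximal.exists_mem_commutator_eqOn {Γ : Subgroup (C ≃ₜ C)}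
    (hΓ : ExtremelyProximal (Γ : Set (C ≃ₜ C))) {s : C ≃ₜ C} (hsΓ : s ∈ Γ) {S : Set C}
    (hS : IsClopen S) (hS_ne_univ : S ≠ univ) (hs : ∀ x ∉ S, s x = x) :
    ∃ h ∈ ⁅Γ, Γ⁆, EqOn h s S := by
  rcases S.eq_empty_or_nonempty with rfl | hS_ne
  · exact ⟨1, one_mem _, eqOn_empty _ _⟩
  obtain ⟨t, htΓ, ht⟩ := hΓ S Sᶜ hS hS.compl hS_ne (nonempty_compl.2 hS_ne_univ) hS_ne_univ
    (compl_ne_univ.2 hS_ne)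
  exact ⟨⁅s, t⁆, Subgroup.commutator_mem_commutator hsΓ htΓ,
    fun x => commutatorElement_apply_of_mem hs (subset_compl_iff_disjoint_left.1 ht.subset)⟩

end Commutator

section ConjugateMul

variable [TopologicalSpace C]

theorem exists_conjugate_mul_fixing_of_disjoint {Γ : Subgroup (C ≃ₜ C)}
    (hfull : IsTopologicalFullGroup Γ) (hprox : ExtremelyProximal (Γ : Set (C ≃ₜ C)))
    {f g : C ≃ₜ C} (hfΓ : f ∈ Γ) (hgΓ : g ∈ Γ) {U W : Set C} (hU : IsClopen U) (hW : IsClopen W)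
    (hU_ne : U.Nonempty) (hW_ne : W.Nonempty) (hUf : Disjoint U (f '' U))
    (hWg : Disjoint W (⇑g⁻¹ '' W)) (hUW : Disjoint (U ∪ f '' U) (W ∪ ⇑g⁻¹ '' W)) :
    ∃ h ∈ ⁅Γ, Γ⁆, ∀ x ∈ U, (h * g * h⁻¹ * f) x = x := by
  obtain ⟨⟨hU_W, hfU_W⟩, -⟩ := by
    simpa only [disjoint_union_left, disjoint_union_right] using hUW
  obtain ⟨a, haΓ, haUW⟩ := hprox U W hU hW hU_ne hW_ne
    (fun h => hW_ne.ne_empty (univ_disjoint.1 (h ▸ hU_W)))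
    (fun h => hU_ne.ne_empty (disjoint_univ.1 (h ▸ hU_W)))
  set b := g⁻¹ * a * f⁻¹
  have hb : ∀ x, b (f x) = g⁻¹ (a x) := fun x => by simp [b]
  have hbfU : b '' (f '' U) ⊆ ⇑g⁻¹ '' W := by
    rintro _ ⟨_, ⟨x, hx, rfl⟩, rfl⟩
    exact hb x ▸ mem_image_of_mem _ (haUW.subset (mem_image_of_mem a hx))
  obtain ⟨s, hsΓ, hs_supp, hs_a, hs_b⟩ := hfull.exists_mem_swap_swap haΓ
    (mul_mem (mul_mem (inv_mem hgΓ) haΓ) (inv_mem hfΓ)) hU (f.isClopen_image.2 hU) hUf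
    (hUW.mono_right (union_subset_union haUW.subset hbfU)) (hWg.mono haUW.subset hbfU)
  set S := (U ∪ a '' U) ∪ (f '' U ∪ b '' (f '' U))
  have hS : IsClopen S := (hU.union (a.isClopen_image.2 hU)).union
    ((f.isClopen_image.2 hU).union (b.isClopen_image.2 (f.isClopen_image.2 hU)))
  have hS_ne_univ : S ≠ univ := by
    obtain ⟨z, hzW, hz_aU⟩ := exists_of_ssubset haUW
    refine (ne_univ_iff_exists_notMem S).2 ⟨z, ?_⟩
    simp only [S, mem_union, not_or]
    exact ⟨⟨disjoint_right.1 hU_W hzW, hz_aU⟩, disjoint_right.1 hfU_W hzW,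
      fun hz => disjoint_left.1 hWg hzW (hbfU hz)⟩
  obtain ⟨h, hhΓ, hhs⟩ := hprox.exists_mem_commutator_eqOn hsΓ hS hS_ne_univ hs_supp
  refine ⟨h, hhΓ, fun x hx => ?_⟩
  have h_bfx : h (b (f x)) = f x :=
    (hhs (Or.inr (Or.inr (mem_image_of_mem b (mem_image_of_mem f hx))))).trans
      (hs_b _ (mem_image_of_mem f hx))
  have h_ax : h (a x) = x := (hhs (Or.inl (Or.inr (mem_image_of_mem a hx)))).trans (hs_a x hx)
  rw [hb] at h_bfx
  simp only [Homeomorph.mul_apply, Homeomorph.inv_apply] at h_bfx ⊢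
  rw [← h_bfx, h.symm_apply_apply, g.apply_symm_apply, h_ax]

end ConjugateMul

/-- If `Γ` is a topological full group acting extremely proximally on a Cantor
set `C`, then for any nontrivial `f, g ∈ Γ` there is `h ∈ Γ' = ⁅Γ,Γ⁆` such that
`(hgh⁻¹)·f` is the identity on some nonempty clopen subset of `C`. -/
theorem exists_conjugate_mul_fixing_clopen [TopologicalSpace C]
    (hC : Nonempty (C ≃ₜ (ℕ → Bool))) (Γ : Subgroup (C ≃ₜ C))
    (hfull : IsTopologicalFullGroup Γ) (hprox : ExtremelyProximal (Γ : Set (C ≃ₜ C)))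
    (f g : C ≃ₜ C) (hfΓ : f ∈ Γ) (hgΓ : g ∈ Γ) (hf : f ≠ 1) (hg : g ≠ 1) :
    ∃ h ∈ (⁅Γ, Γ⁆ : Subgroup (C ≃ₜ C)), ∃ U : Set C, IsClopen U ∧ U.Nonempty ∧
      ∀ x ∈ U, (h * g * h⁻¹ * f) x = x := by
  obtain ⟨φ⟩ := hC
  have : CompactSpace C := φ.symm.compactSpace
  have : T2Space C := φ.isEmbedding.t2Space
  have : TotallyDisconnectedSpace C := φ.symm.totallyDisconnectedSpace
  obtain ⟨x, hx⟩ := DFunLike.ne_iff.1 hf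
  have : Nontrivial C := nontrivial_of_ne _ _ hx
  have : PerfectSpace C := hprox.perfectSpace
  obtain ⟨U, W, hU, hW, hU_ne, hW_ne, hUf, hWg, hUW⟩ :=
    exists_isClopen_disjoint_images hf (inv_ne_one.2 hg)
  obtain ⟨h, hhΓ, hfix⟩ := exists_conjugate_mul_fixing_of_disjoint hfull hprox hfΓ hgΓ hU hW
    hU_ne hW_ne hUf hWg hUW
  exact ⟨h, hhΓ, U, hU, hU_ne, hfix⟩
end

section
/- Let Γ be a topological full group acting faithfully and extremely proximally on a Cantor set C, and let V ⊊ C be a proper clopen set. Then there exists a proper clopen set U with V ⊊ U ⊊ C such that every element of Γ' supported on V lies in the commutator subgroup of Γ_U, where Γ_U is the subgroup of elements supported on U. -/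
variable {C : Type*}

/-- The subgroup of elements of `Γ` supported on a set `U`. -/
def suppSubgroup [TopologicalSpace C] (Γ : Subgroup (C ≃ₜ C)) (U : Set C) :
    Subgroup (C ≃ₜ C) where
  carrier := {g | g ∈ Γ ∧ ∀ x ∉ U, g x = x}
  one_mem' := ⟨Γ.one_mem, fun _ _ => rfl⟩
  mul_mem' := by
    rintro a b ⟨ha, ha'⟩ ⟨hb, hb'⟩
    exact ⟨Γ.mul_mem ha hb, fun x hx => by
      show a (b x) = x
      rw [hb' x hx, ha' x hx]⟩
  inv_mem' := by
    rintro a ⟨ha, ha'⟩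
    refine ⟨Γ.inv_mem ha, fun x hx => ?_⟩
    conv_lhs => rw [← ha' x hx]
    exact a.symm_apply_apply x


/-!
Extreme proximality applied to `Vᶜ` gives `t ∈ Γ` with `t '' Vᶜ ⊊ Vᶜ`. The map `j` which is the
identity on `V` and `t` off `V` is injective, locally in `Γ`, and has clopen range
`U = V ∪ t '' Vᶜ ⊊ C`. Transporting permutations along `j` (conjugate by `j` on `U`, identity off
`U`) is a homomorphism which, by fullness, maps `Γ` into `Γ_U`, hence `Γ'` into `[Γ_U, Γ_U]`,
and which fixes every permutation supported on `V`. If `V = ∅`, first enlarge it to a nonempty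
proper clopen set.
-/

open Filter Function Set Topology

section Transport

variable {j : C → C} (hj : Injective j) [DecidablePred (· ∈ range j)]

lemma Equiv.Perm.extendDomain_ofInjective_apply_self (σ : Equiv.Perm C) (x : C) :
    σ.extendDomain (Equiv.ofInjective j hj) (j x) = j (σ x) :=
  σ.extendDomain_apply_image (Equiv.ofInjective j hj) x

lemma Equiv.Perm.extendDomain_ofInjective_apply_of_notMem (σ : Equiv.Perm C) {z : C}
    (hz : z ∉ range j) : σ.extendDomain (Equiv.ofInjective j hj) z = z :=
  σ.extendDomain_apply_not_subtype _ hz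

lemma Equiv.Perm.extendDomain_ofInjective_eq_self {V : Set C} (hjV : ∀ x ∈ V, j x = x)
    (hjVc : MapsTo j Vᶜ Vᶜ) {σ : Equiv.Perm C} (hσV : ∀ x ∉ V, σ x = x) :
    σ.extendDomain (Equiv.ofInjective j hj) = σ := by
  have hσV' : MapsTo σ V V := fun x hx => by_contra fun h => h (by rwa [σ.injective (hσV _ h)])
  ext z
  by_cases hz : z ∈ range j
  · obtain ⟨x, rfl⟩ := hz
    rw [σ.extendDomain_ofInjective_apply_self hj]
    by_cases hx : x ∈ V
    · rw [hjV x hx, hjV _ (hσV' hx)]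
    · rw [hσV x hx, hσV _ (hjVc hx)]
  · have hzV : z ∉ V := fun h => hz ⟨z, hjV z h⟩
    rw [σ.extendDomain_ofInjective_apply_of_notMem hj hz, hσV z hzV]

end Transport

lemma Filter.EventuallyEq.eventually_apply_homeomorph_symm {X Y : Type*} [TopologicalSpace X]
    [TopologicalSpace Y] {f : X → Y} {γ : X ≃ₜ Y} {y : X} (h : f =ᶠ[𝓝 y] γ) :
    ∀ᶠ z in 𝓝 (f y), f (γ.symm z) = z := by
  have hγy : γ.symm (f y) = y := by rw [h.eq_of_nhds, γ.symm_apply_apply]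
  filter_upwards [h.comp_tendsto (hγy ▸ γ.symm.continuous.tendsto (f y))] with z hz
  exact hz.trans (γ.apply_symm_apply z)

section FullGroup

variable [TopologicalSpace C]

def Homeomorph.toPermHom : (C ≃ₜ C) →* Equiv.Perm C where
  toFun := Homeomorph.toEquiv
  map_one' := rfl
  map_mul' _ _ := rfl

lemma Homeomorph.toPermHom_injective : Injective (Homeomorph.toPermHom (C := C)) :=
  fun _ _ h => Homeomorph.toEquiv_injective h

def IsLocallyIn (Γ : Subgroup (C ≃ₜ C)) (f : C → C) : Prop :=
  ∀ x, ∃ γ ∈ Γ, f =ᶠ[𝓝 x] γ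

variable {Γ : Subgroup (C ≃ₜ C)}

lemma isLocallyIn_of_mem {γ : C ≃ₜ C} (hγ : γ ∈ Γ) : IsLocallyIn Γ γ :=
  fun _ => ⟨γ, hγ, .rfl⟩

namespace IsLocallyIn

variable {f g : C → C}

lemma continuous (hf : IsLocallyIn Γ f) : Continuous f :=
  continuous_iff_continuousAt.2 fun x =>
    let ⟨γ, _, hγ⟩ := hf x
    γ.continuous.continuousAt.congr hγ.symm

lemma comp (hf : IsLocallyIn Γ f) (hg : IsLocallyIn Γ g) : IsLocallyIn Γ (f ∘ g) := by
  intro x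
  obtain ⟨γ₂, hγ₂, hg₂⟩ := hg x
  obtain ⟨γ₁, hγ₁, hf₁⟩ := hf (g x)
  exact ⟨γ₁ * γ₂, Γ.mul_mem hγ₁ hγ₂,
    (hf₁.comp_tendsto (hg.continuous.tendsto x)).trans (hg₂.fun_comp γ₁)⟩

lemma piecewise {S : Set C} [∀ x, Decidable (x ∈ S)] (hS : IsClopen S)
    (hf : IsLocallyIn Γ f) (hg : IsLocallyIn Γ g) : IsLocallyIn Γ (S.piecewise f g) := by
  intro x
  by_cases hx : x ∈ S
  · obtain ⟨γ, hγ, hfγ⟩ := hf x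
    exact ⟨γ, hγ, ((S.piecewise_eqOn f g).eventuallyEq_of_mem (hS.isOpen.mem_nhds hx)).trans hfγ⟩
  · obtain ⟨γ, hγ, hgγ⟩ := hg x
    exact ⟨γ, hγ,
      ((S.piecewise_eqOn_compl f g).eventuallyEq_of_mem (hS.compl.isOpen.mem_nhds hx)).trans hgγ⟩

lemma symm {σ : Equiv.Perm C} (hσ : IsLocallyIn Γ σ) : IsLocallyIn Γ σ.symm := by
  intro x
  obtain ⟨γ, hγ, hσγ⟩ := hσ (σ.symm x)
  refine ⟨γ⁻¹, Γ.inv_mem hγ, ?_⟩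
  have hσγ' := hσγ.eventually_apply_homeomorph_symm
  rw [Equiv.apply_symm_apply] at hσγ'
  filter_upwards [hσγ'] with z hz
  exact σ.symm_apply_eq.2 hz.symm

lemma extendDomain {j : C → C} (hj : Injective j) [DecidablePred (· ∈ range j)]
    (hjΓ : IsLocallyIn Γ j) (hjc : IsClosed (range j)) {σ : Equiv.Perm C}
    (hσ : IsLocallyIn Γ σ) : IsLocallyIn Γ (σ.extendDomain (Equiv.ofInjective j hj)) := by
  intro x
  by_cases hx : x ∈ range j
  · obtain ⟨y, rfl⟩ := hx
    obtain ⟨γ, hγ, hjγ⟩ := hjΓ y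
    obtain ⟨δ, hδ, hδeq⟩ := hjΓ.comp (hσ.comp (isLocallyIn_of_mem (Γ.inv_mem hγ))) (j y)
    refine ⟨δ, hδ, EventuallyEq.trans ?_ hδeq⟩
    filter_upwards [hjγ.eventually_apply_homeomorph_symm] with z hz
    calc σ.extendDomain (Equiv.ofInjective j hj) z
        = σ.extendDomain (Equiv.ofInjective j hj) (j (γ.symm z)) := by rw [hz]
      _ = j (σ (γ.symm z)) := σ.extendDomain_ofInjective_apply_self hj _
  · refine ⟨1, Γ.one_mem, ?_⟩
    filter_upwards [hjc.isOpen_compl.mem_nhds hx] with z hz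
    exact σ.extendDomain_ofInjective_apply_of_notMem hj hz

end IsLocallyIn

namespace IsTopologicalFullGroup

lemma mem_map_suppSubgroup (hfull : IsTopologicalFullGroup Γ) {σ : Equiv.Perm C}
    (hσ : IsLocallyIn Γ σ) {U : Set C} (hσU : ∀ x ∉ U, σ x = x) : σ ∈ (suppSubgroup Γ U).map Homeomorph.toPermHom := by
  refine ⟨⟨σ, hσ.continuous, hσ.symm.continuous⟩, ⟨hfull _ fun x => ?_, hσU⟩, rfl⟩
  obtain ⟨γ, hγ, hσγ⟩ := hσ x
  obtain ⟨N, hN, hNo, hxN⟩ := eventually_nhds_iff.1 hσγ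
  exact ⟨N, hNo, hxN, γ, hγ, hN⟩

theorem mem_commutator_suppSubgroup_range (hfull : IsTopologicalFullGroup Γ) {j : C → C}
    (hj : Injective j) (hjΓ : IsLocallyIn Γ j) (hjc : IsClosed (range j)) {V : Set C}
    (hjV : ∀ x ∈ V, j x = x) (hjVc : MapsTo j Vᶜ Vᶜ) {g : C ≃ₜ C} (hg : g ∈ ⁅Γ, Γ⁆)
    (hgV : ∀ x ∉ V, g x = x) :
    g ∈ ⁅suppSubgroup Γ (range j), suppSubgroup Γ (range j)⁆ := by
  classical
  set Γj := suppSubgroup Γ (range j)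
  -- `Ψ a` is a homeomorphism only for `a ∈ Γ` (by fullness), so `Ψ` takes values in `Perm C`.
  set Ψ := (Equiv.Perm.extendDomainHom (Equiv.ofInjective j hj)).comp Homeomorph.toPermHom
  have hΨ : Γ.map Ψ ≤ Γj.map Homeomorph.toPermHom := by
    rintro _ ⟨a, ha, rfl⟩
    exact hfull.mem_map_suppSubgroup (hjΓ.extendDomain hj hjc (isLocallyIn_of_mem ha))
      fun z hz => Equiv.Perm.extendDomain_ofInjective_apply_of_notMem hj _ hz
  have hΨg : Ψ g ∈ (⁅Γj, Γj⁆).map Homeomorph.toPermHom := by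
    rw [Subgroup.map_commutator]
    refine Subgroup.commutator_mono hΨ hΨ ?_
    rw [← Subgroup.map_commutator]
    exact Subgroup.mem_map_of_mem Ψ hg
  have hΨg_eq : Ψ g = Homeomorph.toPermHom g :=
    Equiv.Perm.extendDomain_ofInjective_eq_self hj hjV hjVc hgV
  rwa [hΨg_eq, Subgroup.mem_map_iff_mem Homeomorph.toPermHom_injective] at hΨg

theorem exists_commutator_suppSubgroup_of_nonempty (hfull : IsTopologicalFullGroup Γ)
    (hprox : ExtremelyProximal (Γ : Set (C ≃ₜ C))) {V : Set C} (hV : IsClopen V)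
    (hVne : V.Nonempty) (hVproper : V ≠ univ) :
    ∃ U : Set C, IsClopen U ∧ V ⊂ U ∧ U ≠ univ ∧
      ∀ g ∈ (⁅Γ, Γ⁆ : Subgroup (C ≃ₜ C)), (∀ x ∉ V, g x = x) →
        g ∈ ⁅suppSubgroup Γ U, suppSubgroup Γ U⁆ := by
  classical
  obtain ⟨t, ht, htV⟩ := hprox Vᶜ Vᶜ hV.compl hV.compl (nonempty_compl.2 hVproper)
    (nonempty_compl.2 hVproper) (compl_ne_univ.2 hVne) (compl_ne_univ.2 hVne)
  have htVc : MapsTo t Vᶜ Vᶜ := fun x hx => htV.subset (mem_image_of_mem t hx)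
  set j := V.piecewise id t
  have hrange : range j = V ∪ t '' Vᶜ := by rw [range_piecewise, image_id]
  have hj : Injective j := (injective_piecewise_iff V).2
    ⟨injOn_id V, t.injective.injOn, fun x hx y hy hxy => htVc hy (hxy ▸ hx)⟩
  have hjΓ : IsLocallyIn Γ j :=
    (isLocallyIn_of_mem Γ.one_mem).piecewise hV (isLocallyIn_of_mem ht)
  have hU : IsClopen (range j) := hrange ▸
    hV.union ⟨t.isClosed_image.2 hV.compl.isClosed, t.isOpen_image.2 hV.compl.isOpen⟩
  refine ⟨range j, hU, ?_, ?_, fun g hg hgV => hfull.mem_commutator_suppSubgroup_range hj hjΓ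
    hU.isClosed (fun x hx => V.piecewise_eqOn id t hx)
    (htVc.congr (V.piecewise_eqOn_compl id t).symm) hg hgV⟩
  · obtain ⟨x, hx⟩ := (nonempty_compl.2 hVproper).image t
    rw [hrange, ssubset_union_left_iff]
    exact fun h => htV.subset hx (h hx)
  · obtain ⟨z, hzVc, hzt⟩ := exists_of_ssubset htV
    rw [hrange]
    exact ne_univ_iff_exists_notMem _ |>.2 ⟨z, fun h => h.elim hzVc hzt⟩

end IsTopologicalFullGroup

lemma exists_isClopen_nonempty_ne_univ {f : C → Bool} (hf : Continuous f)
    (hsurj : Surjective f) : ∃ W : Set C, IsClopen W ∧ W.Nonempty ∧ W ≠ univ := by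
  obtain ⟨x, hx⟩ := hsurj true
  obtain ⟨y, hy⟩ := hsurj false
  refine ⟨f ⁻¹' {true}, (isClopen_discrete _).preimage hf, ⟨x, hx⟩, ?_⟩
  exact ne_univ_iff_exists_notMem _ |>.2 ⟨y, by simp [hy]⟩

end FullGroup

/-- If `Γ` is a topological full group acting extremely proximally on a Cantor
set `C` and `V ⊊ C` is a proper clopen set, then there is a proper clopen set
`U` with `V ⊊ U ⊊ C` such that every element of `Γ' = ⁅Γ,Γ⁆` supported on `V`
lies in the commutator subgroup of `Γ_U`. -/
theorem commutator_supported_in_commutator_of_suppSubgroup [TopologicalSpace C]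
    (hC : Nonempty (C ≃ₜ (ℕ → Bool))) (Γ : Subgroup (C ≃ₜ C))
    (hfull : IsTopologicalFullGroup Γ) (hprox : ExtremelyProximal (Γ : Set (C ≃ₜ C)))
    (V : Set C) (hV : IsClopen V) (hVproper : V ≠ Set.univ) :
    ∃ U : Set C, IsClopen U ∧ V ⊂ U ∧ U ≠ Set.univ ∧
      ∀ g ∈ (⁅Γ, Γ⁆ : Subgroup (C ≃ₜ C)), (∀ x ∉ V, g x = x) →
        g ∈ ⁅suppSubgroup Γ U, suppSubgroup Γ U⁆ := by
  obtain ⟨φ⟩ := hC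
  obtain ⟨W, hW, hWne, hWproper, hVW⟩ :
      ∃ W : Set C, IsClopen W ∧ W.Nonempty ∧ W ≠ univ ∧ V ⊆ W := by
    rcases V.eq_empty_or_nonempty with rfl | hVne
    · obtain ⟨W, hW, hWne, hWproper⟩ := exists_isClopen_nonempty_ne_univ
        (f := fun x => φ x 0) (by fun_prop) fun b => ⟨φ.symm fun _ => b, by simp⟩
      exact ⟨W, hW, hWne, hWproper, empty_subset W⟩
    · exact ⟨V, hV, hVne, hVproper, subset_rfl⟩
  obtain ⟨U, hU, hWU, hUproper, hcomm⟩ :=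
    hfull.exists_commutator_suppSubgroup_of_nonempty hprox hW hWne hWproper
  exact ⟨U, hU, hVW.trans_ssubset hWU, hUproper,
    fun g hg hgV => hcomm g hg fun x hx => hgV x fun h => hx (hVW h)⟩
end
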